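/- arXiv:1304.2170 — 4 statements merged into one kernel-verified Lean document; each statement's English description precedes it below -/
import Mathlib

section
/- For every i ≥ 1, the numbers of alternating permutations satisfy the convolution identity A_{2i-1} = Σ_{j=1}^{i} binom(2i-2, 2j-2) · A_{2j-2} · A_{2(i-j)}. -/
/-- `c` is an alternating (up-down) permutation:
`c 0 < c 1 > c 2 < c 3 > …` (i.e. in 1-based notation `c₁ < c₂ > c₃ < …`). -/
def IsAltPerm {n : ℕ} (c : Equiv.Perm (Fin n)) : Prop :=
  ∀ i : ℕ, ∀ h : i + 1 < n,
    if i % 2 = 0 then c ⟨i, by omega⟩ < c ⟨i + 1, h⟩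
    else c ⟨i + 1, h⟩ < c ⟨i, by omega⟩

/-- `A n`, the number of alternating permutations of size `n` (with `A 0 = 1`). -/
noncomputable def altPermCount (n : ℕ) : ℕ :=
  Nat.card {c : Equiv.Perm (Fin n) // IsAltPerm c}

section helpers

/-- up-down property for a function out of `Fin k`. -/
def UpDownF {α : Type*} [Preorder α] {k : ℕ} (f : Fin k → α) : Prop :=
  ∀ t : ℕ, ∀ h : t + 1 < k,
    if t % 2 = 0 then f ⟨t, by omega⟩ < f ⟨t + 1, h⟩
    else f ⟨t + 1, h⟩ < f ⟨t, by omega⟩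

/-- down-up property. -/
def DownUpF {α : Type*} [Preorder α] {k : ℕ} (f : Fin k → α) : Prop :=
  UpDownF (fun x => OrderDual.toDual (f x))

lemma isAltPerm_iff_upDownF {n : ℕ} (c : Equiv.Perm (Fin n)) :
    IsAltPerm c ↔ UpDownF (⇑c) := Iff.rfl

lemma upDownF_comp_iff {α β : Type*} [Preorder α] [Preorder β] {k : ℕ}
    {φ : α → β} (hφ : StrictMono φ) (hφ' : ∀ a b, φ a < φ b → a < b) (f : Fin k → α) :
    UpDownF (fun x => φ (f x)) ↔ UpDownF f := by
  constructor <;> intro hf t h <;> have := hf t h <;> split <;> split at this <;>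
    first
      | exact hφ' _ _ this
      | exact hφ this
      | omega

lemma natCard_sigma' {γ : Type*} [Fintype γ] (f : γ → Type*) [∀ y, Finite (f y)] :
    Nat.card (Σ y : γ, f y) = ∑ y : γ, Nat.card (f y) := by
  letI : ∀ y, Fintype (f y) := fun y => Fintype.ofFinite _
  rw [Nat.card_eq_fintype_card, Fintype.card_sigma]
  simp [Nat.card_eq_fintype_card]

/-- counting up-down bijections into any linear order of the right size. -/
lemma natCard_upDown {α : Type*} [Fintype α] [LinearOrder α] {k : ℕ}
    (h : Fintype.card α = k) :
    Nat.card {f : Fin k ≃ α // UpDownF (⇑f)} = altPermCount k := by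
  let e : Fin k ≃o α := monoEquivOfFin α h
  refine (Nat.card_congr ?_).symm
  refine Equiv.subtypeEquiv (Equiv.equivCongr (Equiv.refl (Fin k)) e.toEquiv) ?_
  intro c
  rw [isAltPerm_iff_upDownF]
  have : ⇑(Equiv.equivCongr (Equiv.refl (Fin k)) e.toEquiv c) = fun x => e (c x) := by
    funext x; simp
  rw [this]
  exact (upDownF_comp_iff e.strictMono (fun a b hab => by
    simpa using e.lt_iff_lt.mp hab) ⇑c).symm

lemma natCard_downUp {α : Type*} [Fintype α] [LinearOrder α] {k : ℕ}
    (h : Fintype.card α = k) :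
    Nat.card {f : Fin k ≃ α // DownUpF (⇑f)} = altPermCount k := by
  have h' : Fintype.card αᵒᵈ = k := h
  rw [← natCard_upDown h']
  refine Nat.card_congr (Equiv.subtypeEquiv (Equiv.equivCongr (Equiv.refl (Fin k)) OrderDual.toDual) ?_)
  intro f
  constructor <;> intro hf t ht <;> have := hf t ht <;> split <;> split at this <;>
    first | exact this | omega

end helpers

abbrev NZ (n : ℕ) [NeZero n] : Type := {x : Fin n // x ≠ 0}

variable {n : ℕ} [NeZero n]

noncomputable def buildPermFun (p : Fin n) {T : Finset (NZ n)}
    (f : Fin (p : ℕ) ≃ ↥T) (g : Fin (n - 1 - (p : ℕ)) ≃ ↥(Tᶜ)) (x : Fin n) : Fin n :=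
  if h : (x : ℕ) < (p : ℕ) then (f ⟨x, h⟩).1.1
  else if h2 : (x : ℕ) = (p : ℕ) then 0
  else (g ⟨(x : ℕ) - (p : ℕ) - 1, by omega⟩).1.1

lemma buildPermFun_injective (p : Fin n) {T : Finset (NZ n)}
    (f : Fin (p : ℕ) ≃ ↥T) (g : Fin (n - 1 - (p : ℕ)) ≃ ↥(Tᶜ)) :
    Function.Injective (buildPermFun p f g) := by
  have hfg : ∀ a b, (f a).1 ≠ (g b).1 := by
    intro a b hab
    exact absurd (hab ▸ (f a).2) (Finset.mem_compl.mp (g b).2)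
  intro x y hxy
  unfold buildPermFun at hxy
  split_ifs at hxy with h1 h2 h3 h4 h5 h6 h7 h8
  · have := f.injective (Subtype.ext (Subtype.ext hxy))
    simp only [Fin.mk.injEq] at this
    exact Fin.ext this
  · exact absurd hxy (f _).1.2
  · exact absurd (Subtype.ext hxy) (hfg _ _)
  · exact absurd hxy.symm (f _).1.2
  · exact Fin.ext (by omega)
  · exact absurd hxy.symm (g _).1.2
  · exact absurd (Subtype.ext hxy.symm) (hfg _ _)
  · exact absurd hxy (g _).1.2
  · have := g.injective (Subtype.ext (Subtype.ext hxy))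
    simp only [Fin.mk.injEq] at this
    exact Fin.ext (by omega)

noncomputable def buildPerm (p : Fin n) {T : Finset (NZ n)}
    (f : Fin (p : ℕ) ≃ ↥T) (g : Fin (n - 1 - (p : ℕ)) ≃ ↥(Tᶜ)) : Equiv.Perm (Fin n) :=
  Equiv.ofBijective _ ((Finite.injective_iff_bijective).mp (buildPermFun_injective p f g))

lemma buildPerm_apply (p : Fin n) {T : Finset (NZ n)}
    (f : Fin (p : ℕ) ≃ ↥T) (g : Fin (n - 1 - (p : ℕ)) ≃ ↥(Tᶜ)) (x : Fin n) :
    buildPerm p f g x = buildPermFun p f g x := rfl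

lemma buildPerm_symm_zero (p : Fin n) {T : Finset (NZ n)}
    (f : Fin (p : ℕ) ≃ ↥T) (g : Fin (n - 1 - (p : ℕ)) ≃ ↥(Tᶜ)) :
    (buildPerm p f g).symm 0 = p := by
  rw [Equiv.symm_apply_eq, buildPerm_apply, buildPermFun]
  rw [dif_neg (by omega), dif_pos rfl]

def leftSet (c : Equiv.Perm (Fin n)) : Finset (NZ n) :=
  Finset.univ.filter fun x => c.symm x.val < c.symm 0

lemma mem_leftSet {c : Equiv.Perm (Fin n)} {x : NZ n} :
    x ∈ leftSet c ↔ c.symm x.val < c.symm 0 := by simp [leftSet]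

lemma card_leftSet (c : Equiv.Perm (Fin n)) :
    (leftSet c).card = (c.symm 0 : ℕ) := by
  classical
  set p := c.symm 0 with hp
  have key : ∀ k : Fin n, k ∈ Finset.Iio p → c k ≠ 0 := by
    intro k hk h0
    have hkp : k = p := by rw [hp, ← h0, Equiv.symm_apply_apply]
    exact absurd (Finset.mem_Iio.mp hk) (hkp ▸ lt_irrefl p)
  rw [← Fin.card_Iio p]
  refine Finset.card_bij' (fun x _ => c.symm x.val) (fun k hk => ⟨c k, key k hk⟩)
    (fun x hx => Finset.mem_Iio.mpr (mem_leftSet.mp hx)) ?_ ?_ ?_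
  · intro k hk
    rw [mem_leftSet]
    simpa using Finset.mem_Iio.mp hk
  · intro x _
    exact Subtype.ext (by simp)
  · intro k _
    simp

lemma card_NZ : Fintype.card (NZ n) = n - 1 := by
  have : Fintype.card {x : Fin n // ¬ x = 0} = n - 1 := by
    rw [Fintype.card_subtype_compl, Fintype.card_subtype_eq, Fintype.card_fin]
  simpa using this

lemma buildPerm_leftSet (p : Fin n) {T : Finset (NZ n)}
    (f : Fin (p : ℕ) ≃ ↥T) (g : Fin (n - 1 - (p : ℕ)) ≃ ↥(Tᶜ)) :
    leftSet (buildPerm p f g) = T := by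
  classical
  set c := buildPerm p f g with hc
  ext x
  rw [mem_leftSet, buildPerm_symm_zero]
  constructor
  · intro hx
    set k := c.symm x.val with hk
    have hck : c k = x.val := by rw [hk, Equiv.apply_symm_apply]
    have hkp : (k : ℕ) < (p : ℕ) := hx
    have : c k = (f ⟨k, hkp⟩).1.1 := by
      rw [buildPerm_apply, buildPermFun, dif_pos hkp]
    have hxf : x = (f ⟨k, hkp⟩).1 := Subtype.ext (by rw [← hck, this])
    rw [hxf]
    exact (f _).2
  · intro hx
    set k := f.symm ⟨x, hx⟩ with hk
    have hkn : (k : ℕ) < n := lt_trans k.isLt p.isLt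
    have hck : c ⟨(k : ℕ), hkn⟩ = x.val := by
      rw [buildPerm_apply, buildPermFun, dif_pos k.isLt]
      have : f ⟨(k : ℕ), k.isLt⟩ = ⟨x, hx⟩ := by
        rw [hk]; exact (Fin.eta _ _) ▸ f.apply_symm_apply _
      rw [this]
    have : c.symm x.val = ⟨(k : ℕ), hkn⟩ := by rw [← hck, Equiv.symm_apply_apply]
    rw [this]
    exact k.isLt

lemma upDownF_lt {α : Type*} [Preorder α] {k : ℕ} {f : Fin k → α} (hf : UpDownF f)
    {s : ℕ} (hs : s % 2 = 0) (h : s + 1 < k) : f ⟨s, by omega⟩ < f ⟨s + 1, h⟩ := by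
  have := hf s h; rwa [if_pos hs] at this

lemma upDownF_gt {α : Type*} [Preorder α] {k : ℕ} {f : Fin k → α} (hf : UpDownF f)
    {s : ℕ} (hs : s % 2 = 1) (h : s + 1 < k) : f ⟨s + 1, h⟩ < f ⟨s, by omega⟩ := by
  have := hf s h; rwa [if_neg (by omega)] at this

lemma coe2_lt {T : Finset (NZ n)} {a b : ↥T} : a.1.1 < b.1.1 ↔ a < b := by
  rw [← Subtype.coe_lt_coe, ← Subtype.coe_lt_coe]

lemma fin_pos_of_ne_zero {a : Fin n} (ha : a ≠ 0) : 0 < a := by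
  rw [Fin.lt_def, Fin.val_zero]
  exact Nat.pos_of_ne_zero (fun h => ha (Fin.ext (by simpa using h)))

lemma buildPerm_isAltPerm (p : Fin n) (hp2 : (p : ℕ) % 2 = 0) {T : Finset (NZ n)}
    (f : Fin (p : ℕ) ≃ ↥T) (g : Fin (n - 1 - (p : ℕ)) ≃ ↥(Tᶜ))
    (hf : UpDownF ⇑f) (hg : DownUpF ⇑g) : IsAltPerm (buildPerm p f g) := by
  intro s h
  have capp : ∀ x : Fin n, buildPerm p f g x = buildPermFun p f g x := buildPerm_apply p f g
  have cf : ∀ (x : Fin n) (hx : (x : ℕ) < (p : ℕ)),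
      buildPerm p f g x = (f ⟨x, hx⟩).1.1 := by
    intro x hx; rw [capp, buildPermFun, dif_pos hx]
  have cp : ∀ (x : Fin n), (x : ℕ) = (p : ℕ) → buildPerm p f g x = 0 := by
    intro x hx; rw [capp, buildPermFun, dif_neg (by omega), dif_pos hx]
  have cg : ∀ (x : Fin n) (hx : (p : ℕ) < (x : ℕ)),
      buildPerm p f g x = (g ⟨(x : ℕ) - (p : ℕ) - 1, by omega⟩).1.1 := by
    intro x hx; rw [capp, buildPermFun, dif_neg (by omega), dif_neg (by omega)]
  rcases Nat.lt_or_ge (s + 1) (p : ℕ) with hsp | hsp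
  · rw [cf ⟨s, by omega⟩ (by simpa using by omega), cf ⟨s + 1, h⟩ (by simpa using hsp)]
    have := hf s hsp
    split
    · next hs => rw [coe2_lt]; exact upDownF_lt hf hs hsp
    · next hs => rw [coe2_lt]; exact upDownF_gt hf (by omega) hsp
  rcases Nat.lt_or_ge s (p : ℕ) with hsp2 | hsp2
  · -- s + 1 = p
    have hsp3 : s + 1 = (p : ℕ) := by omega
    rw [if_neg (by omega)]
    rw [cp ⟨s + 1, h⟩ (by simpa using hsp3), cf ⟨s, by omega⟩ (by simpa using hsp2)]
    exact fin_pos_of_ne_zero (f _).1.2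
  rcases Nat.eq_or_lt_of_le hsp2 with hsp3 | hsp3
  · -- s = p
    rw [if_pos (by omega)]
    rw [cp ⟨s, by omega⟩ (by simpa using hsp3.symm), cg ⟨s + 1, h⟩ (by simpa using by omega)]
    exact fin_pos_of_ne_zero (g _).1.2
  · -- s > p
    set u := s - (p : ℕ) - 1 with hu
    have hun : u + 1 < n - 1 - (p : ℕ) := by omega
    have e1 : buildPerm p f g ⟨s, by omega⟩ = (g ⟨u, by omega⟩).1.1 := by
      rw [cg ⟨s, by omega⟩ (by simpa using hsp3)]
    have e2 : buildPerm p f g ⟨s + 1, h⟩ = (g ⟨u + 1, hun⟩).1.1 := by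
      rw [cg ⟨s + 1, h⟩ (by simpa using by omega)]
      exact congrArg (fun k => (g k).1.1)
        (Fin.ext (show ((⟨s + 1, h⟩ : Fin n) : ℕ) - (p : ℕ) - 1 = u + 1 by
          show s + 1 - (p : ℕ) - 1 = u + 1; omega))
    rw [e1, e2]
    have hgu := hg u hun
    split
    · next hs =>
      rw [coe2_lt]
      have : u % 2 = 1 := by omega
      have := upDownF_gt hg this hun
      exact OrderDual.toDual_lt_toDual.mp this
    · next hs =>
      rw [coe2_lt]
      have : u % 2 = 0 := by omega
      have := upDownF_lt hg this hun
      exact OrderDual.toDual_lt_toDual.mp this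

lemma split_ne (c : Equiv.Perm (Fin n)) {p : Fin n} (hp : c.symm 0 = p)
    (x : Fin n) (hx : x ≠ p) : c x ≠ 0 := by
  intro h0
  exact hx (by rw [← hp, ← h0, Equiv.symm_apply_apply])

noncomputable def splitF (c : Equiv.Perm (Fin n)) (p : Fin n) (T : Finset (NZ n))
    (hp : c.symm 0 = p) (hT : leftSet c = T) : Fin (p : ℕ) ≃ ↥T :=
  Equiv.ofBijective
    (fun k => ⟨⟨c ⟨k, lt_trans k.isLt p.isLt⟩,
        split_ne c hp _ (fun h => absurd (congrArg Fin.val h) k.isLt.ne)⟩,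
      by
        rw [← hT, mem_leftSet]
        simpa [hp, Fin.lt_def] using k.isLt⟩)
    (by
      rw [Fintype.bijective_iff_injective_and_card]
      constructor
      · intro a b hab
        have := c.injective (Subtype.ext_iff.mp (Subtype.ext_iff.mp hab))
        simpa [Fin.ext_iff] using this
      · rw [Fintype.card_fin, Fintype.card_coe, ← hT, card_leftSet, hp])

lemma splitF_apply (c : Equiv.Perm (Fin n)) (p : Fin n) (T : Finset (NZ n))
    (hp : c.symm 0 = p) (hT : leftSet c = T) (k : Fin (p : ℕ)) :
    ((splitF c p T hp hT k : NZ n) : Fin n) = c ⟨k, lt_trans k.isLt p.isLt⟩ := rfl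

noncomputable def splitG (c : Equiv.Perm (Fin n)) (p : Fin n) (T : Finset (NZ n))
    (hp : c.symm 0 = p) (hT : leftSet c = T) : Fin (n - 1 - (p : ℕ)) ≃ ↥(Tᶜ) :=
  Equiv.ofBijective
    (fun k => ⟨⟨c ⟨(p : ℕ) + 1 + k, by omega⟩,
        split_ne c hp _ (fun h => absurd (congrArg Fin.val h)
          (show ¬((p : ℕ) + 1 + (k : ℕ) = (p : ℕ)) by omega))⟩,
      by
        rw [Finset.mem_compl]
        intro hmem
        rw [← hT, mem_leftSet] at hmem
        simp only [Equiv.symm_apply_apply, hp, Fin.lt_def] at hmem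
        omega⟩)
    (by
      rw [Fintype.bijective_iff_injective_and_card]
      constructor
      · intro a b hab
        have := c.injective (Subtype.ext_iff.mp (Subtype.ext_iff.mp hab))
        simpa [Fin.ext_iff] using this
      · rw [Fintype.card_fin, Fintype.card_coe, Finset.card_compl, ← hT, card_leftSet, hp,
          card_NZ])

lemma splitG_apply (c : Equiv.Perm (Fin n)) (p : Fin n) (T : Finset (NZ n))
    (hp : c.symm 0 = p) (hT : leftSet c = T) (k : Fin (n - 1 - (p : ℕ))) :
    ((splitG c p T hp hT k : NZ n) : Fin n) = c ⟨(p : ℕ) + 1 + k, by omega⟩ := rfl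

lemma splitF_upDown (c : Equiv.Perm (Fin n)) (p : Fin n) (T : Finset (NZ n))
    (hp : c.symm 0 = p) (hT : leftSet c = T) (hc : IsAltPerm c) :
    UpDownF ⇑(splitF c p T hp hT) := by
  intro s h
  have hc' : UpDownF ⇑c := hc
  split
  · next hs =>
    rw [← coe2_lt]
    exact upDownF_lt hc' hs (by omega)
  · next hs =>
    rw [← coe2_lt]
    exact upDownF_gt hc' (by omega) (by omega)

lemma splitG_downUp (c : Equiv.Perm (Fin n)) (p : Fin n) (T : Finset (NZ n))
    (hp : c.symm 0 = p) (hT : leftSet c = T) (hc : IsAltPerm c) (hp2 : (p : ℕ) % 2 = 0) :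
    DownUpF ⇑(splitG c p T hp hT) := by
  intro s h
  have hc' : UpDownF ⇑c := hc
  split
  · next hs =>
    rw [OrderDual.toDual_lt_toDual, ← coe2_lt]
    exact upDownF_gt hc' (show ((p : ℕ) + 1 + s) % 2 = 1 by omega) (by omega)
  · next hs =>
    rw [OrderDual.toDual_lt_toDual, ← coe2_lt]
    exact upDownF_lt hc' (show ((p : ℕ) + 1 + s) % 2 = 0 by omega) (by omega)

noncomputable def fibEquiv (p : Fin n) (T : Finset (NZ n)) (hp2 : (p : ℕ) % 2 = 0) :
    {c : Equiv.Perm (Fin n) // IsAltPerm c ∧ c.symm 0 = p ∧ leftSet c = T} ≃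
      ({f : Fin (p : ℕ) ≃ ↥T // UpDownF ⇑f} ×
        {g : Fin (n - 1 - (p : ℕ)) ≃ ↥(Tᶜ) // DownUpF ⇑g}) where
  toFun x :=
    (⟨splitF x.1 p T x.2.2.1 x.2.2.2, splitF_upDown _ _ _ _ _ x.2.1⟩,
     ⟨splitG x.1 p T x.2.2.1 x.2.2.2, splitG_downUp _ _ _ _ _ x.2.1 hp2⟩)
  invFun y :=
    ⟨buildPerm p y.1.1 y.2.1, buildPerm_isAltPerm p hp2 _ _ y.1.2 y.2.2,
      buildPerm_symm_zero _ _ _, buildPerm_leftSet _ _ _⟩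
  left_inv := by
    rintro ⟨c, hc, hpc, hTc⟩
    apply Subtype.ext
    apply Equiv.ext
    intro x
    show buildPermFun p _ _ x = c x
    unfold buildPermFun
    split_ifs with h1 h2
    · rfl
    · rw [show x = p from Fin.ext h2, ← hpc, Equiv.apply_symm_apply]
    · show ((splitG c p T hpc hTc ⟨(x : ℕ) - (p : ℕ) - 1, by omega⟩ : NZ n) : Fin n) = c x
      rw [splitG_apply]
      exact congrArg c (Fin.ext (show (p : ℕ) + 1 + ((x : ℕ) - (p : ℕ) - 1) = (x : ℕ) by omega))
  right_inv := by
    rintro ⟨⟨f, hf⟩, ⟨g, hg⟩⟩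
    refine Prod.ext ?_ ?_
    · apply Subtype.ext
      apply Equiv.ext
      intro k
      apply Subtype.ext
      apply Subtype.ext
      show buildPermFun p f g ⟨k, _⟩ = (f k).1.1
      unfold buildPermFun
      rw [dif_pos (show ((⟨(k : ℕ), _⟩ : Fin n) : ℕ) < (p : ℕ) from k.isLt)]
    · apply Subtype.ext
      apply Equiv.ext
      intro k
      apply Subtype.ext
      apply Subtype.ext
      show buildPermFun p f g ⟨(p : ℕ) + 1 + k, _⟩ = (g k).1.1
      unfold buildPermFun
      rw [dif_neg (by simp; omega), dif_neg (by simp; omega)]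
      exact congrArg (fun t => (g t).1.1) (Fin.ext (by simp; omega))

lemma natCard_fib (p : Fin n) (T : Finset (NZ n)) (hp2 : (p : ℕ) % 2 = 0)
    (hT : T.card = (p : ℕ)) :
    Nat.card {c : Equiv.Perm (Fin n) // IsAltPerm c ∧ c.symm 0 = p ∧ leftSet c = T} =
      altPermCount (p : ℕ) * altPermCount (n - 1 - (p : ℕ)) := by
  rw [← natCard_upDown (show Fintype.card ↥T = (p : ℕ) by rw [Fintype.card_coe, hT]),
    ← natCard_downUp (show Fintype.card ↥(Tᶜ) = n - 1 - (p : ℕ) by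
      rw [Fintype.card_coe, Finset.card_compl, hT, card_NZ]),
    ← Nat.card_prod]
  exact Nat.card_congr (fibEquiv p T hp2)

lemma fib_isEmpty_odd (p : Fin n) (T : Finset (NZ n)) (hp2 : (p : ℕ) % 2 = 1) :
    IsEmpty {c : Equiv.Perm (Fin n) // IsAltPerm c ∧ c.symm 0 = p ∧ leftSet c = T} := by
  constructor
  rintro ⟨c, hc, hpc, -⟩
  have hc' : UpDownF ⇑c := hc
  have h : ((p : ℕ) - 1) + 1 < n := by omega
  have hlt := upDownF_lt hc' (show ((p : ℕ) - 1) % 2 = 0 by omega) h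
  have he : (⟨(p : ℕ) - 1 + 1, h⟩ : Fin n) = p := Fin.ext (by simp; omega)
  have h0 : c p = 0 := by rw [← hpc, Equiv.apply_symm_apply]
  rw [he, h0] at hlt
  exact absurd (Fin.lt_def.mp hlt) (by simp)

lemma fib_isEmpty_card (p : Fin n) (T : Finset (NZ n)) (hT : T.card ≠ (p : ℕ)) :
    IsEmpty {c : Equiv.Perm (Fin n) // IsAltPerm c ∧ c.symm 0 = p ∧ leftSet c = T} := by
  constructor
  rintro ⟨c, -, hpc, hTc⟩
  exact hT (by rw [← hTc, card_leftSet, hpc])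

def flattenEquiv (p : Fin n) (T : Finset (NZ n)) :
    {x : {c : Equiv.Perm (Fin n) // IsAltPerm c} //
        (x.1.symm 0, leftSet x.1) = (p, T)} ≃
      {c : Equiv.Perm (Fin n) // IsAltPerm c ∧ c.symm 0 = p ∧ leftSet c = T} where
  toFun x := ⟨x.1.1, x.1.2, (Prod.ext_iff.mp x.2).1, (Prod.ext_iff.mp x.2).2⟩
  invFun c := ⟨⟨c.1, c.2.1⟩, Prod.ext c.2.2.1 c.2.2.2⟩
  left_inv x := rfl
  right_inv c := rfl

lemma sum_range_even (m : ℕ) (H : ℕ → ℕ) :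
    ∑ v ∈ Finset.range (2 * m + 1), (if v % 2 = 0 then H v else 0) =
      ∑ t ∈ Finset.range (m + 1), H (2 * t) := by
  induction m with
  | zero => simp
  | succ m ih =>
    have h1 : 2 * (m + 1) + 1 = ((2 * m + 1) + 1) + 1 := by ring
    rw [h1, Finset.sum_range_succ, Finset.sum_range_succ, ih,
      if_neg (show ¬(2 * m + 1) % 2 = 0 by omega), if_pos (show (2 * m + 1 + 1) % 2 = 0 by omega)]
    have h2 : 2 * m + 1 + 1 = 2 * (m + 1) := by ring
    rw [h2, add_zero]
    conv_rhs => rw [Finset.sum_range_succ]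

lemma altPermCount_odd (m : ℕ) :
    altPermCount (2 * m + 1) = ∑ t ∈ Finset.range (m + 1),
      (2 * m).choose (2 * t) * (altPermCount (2 * t) * altPermCount (2 * (m - t))) := by
  classical
  haveI : NeZero (2 * m + 1) := ⟨by omega⟩
  set n : ℕ := 2 * m + 1 with hn
  have step1 : altPermCount n = ∑ y : Fin n × Finset (NZ n),
      Nat.card {c : Equiv.Perm (Fin n) // IsAltPerm c ∧ c.symm 0 = y.1 ∧ leftSet c = y.2} := by
    rw [altPermCount,
      Nat.card_congr (Equiv.sigmaFiberEquiv
        (fun x : {c : Equiv.Perm (Fin n) // IsAltPerm c} => (x.1.symm 0, leftSet x.1))).symm,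
      natCard_sigma']
    refine Finset.sum_congr rfl fun y _ => ?_
    obtain ⟨p, T⟩ := y
    exact Nat.card_congr (flattenEquiv p T)
  have step3 : ∀ p : Fin n, (∑ T : Finset (NZ n),
      Nat.card {c : Equiv.Perm (Fin n) // IsAltPerm c ∧ c.symm 0 = p ∧ leftSet c = T}) =
      if (p : ℕ) % 2 = 0 then
        (2 * m).choose (p : ℕ) * (altPermCount (p : ℕ) * altPermCount (2 * m - (p : ℕ)))
      else 0 := by
    intro p
    by_cases hp2 : (p : ℕ) % 2 = 0
    · rw [if_pos hp2]
      have hterm : ∀ T : Finset (NZ n),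
          Nat.card {c : Equiv.Perm (Fin n) // IsAltPerm c ∧ c.symm 0 = p ∧ leftSet c = T} =
          if T.card = (p : ℕ) then altPermCount (p : ℕ) * altPermCount (2 * m - (p : ℕ))
          else 0 := by
        intro T
        by_cases hT : T.card = (p : ℕ)
        · rw [if_pos hT, natCard_fib p T hp2 hT]
          have : n - 1 - (p : ℕ) = 2 * m - (p : ℕ) := by omega
          rw [this]
        · rw [if_neg hT]
          exact @Nat.card_of_isEmpty _ (fib_isEmpty_card p T hT)
      rw [Finset.sum_congr rfl (fun T _ => hterm T), Finset.sum_ite, Finset.sum_const,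
        Finset.sum_const_zero, add_zero, smul_eq_mul]
      have hfil : Finset.univ.filter (fun T : Finset (NZ n) => T.card = (p : ℕ)) =
          Finset.powersetCard (p : ℕ) Finset.univ := by
        ext T
        simp [Finset.mem_powersetCard]
      rw [hfil, Finset.card_powersetCard, Finset.card_univ, card_NZ]
      have : n - 1 = 2 * m := by omega
      rw [this]
    · rw [if_neg hp2]
      exact Finset.sum_eq_zero fun T _ =>
        @Nat.card_of_isEmpty _ (fib_isEmpty_odd p T (by omega))
  rw [step1, Fintype.sum_prod_type,
    Finset.sum_congr rfl (fun p _ => step3 p),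
    Fin.sum_univ_eq_sum_range (fun v => if v % 2 = 0 then
      (2 * m).choose v * (altPermCount v * altPermCount (2 * m - v)) else 0) n,
    sum_range_even]
  refine Finset.sum_congr rfl fun t ht => ?_
  have : 2 * m - 2 * t = 2 * (m - t) := by omega
  rw [this]

/-- `A (2i-1) = ∑_{j=1}^{i} binom(2i-2, 2j-2) · A (2j-2) · A (2(i-j))`. -/
theorem altPerm_convolution_odd_M (i : ℕ) (hi : 1 ≤ i) :
    altPermCount (2 * i - 1) =
      ∑ j ∈ Finset.Icc 1 i,
        Nat.choose (2 * i - 2) (2 * j - 2) * altPermCount (2 * j - 2) *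
          altPermCount (2 * (i - j)) := by
  obtain ⟨m, rfl⟩ : ∃ m, i = m + 1 := ⟨i - 1, by omega⟩
  have h1 : 2 * (m + 1) - 1 = 2 * m + 1 := by omega
  rw [h1, altPermCount_odd m,
    show Finset.Icc 1 (m + 1) = Finset.Ico 1 (m + 2) from (Finset.Ico_add_one_right_eq_Icc 1 (m + 1)).symm,
    Finset.sum_Ico_eq_sum_range]
  have h2 : m + 2 - 1 = m + 1 := by omega
  rw [h2]
  refine Finset.sum_congr rfl fun t ht => ?_
  have ea : 2 * (m + 1) - 2 = 2 * m := by omega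
  have eb : 2 * (1 + t) - 2 = 2 * t := by omega
  have ec : m + 1 - (1 + t) = m - t := by omega
  rw [ea, eb, ec, mul_assoc]
end

section
/- For every i ≥ 1, the numbers of alternating permutations satisfy the convolution identity A_{2i} = Σ_{j=1}^{i} binom(2i-1, 2j-2) · A_{2j-2} · A_{2(i-j)+1}. -/
namespace AltAux

open Finset

/-- down-up permutations -/
def IsDownPerm {n : ℕ} (c : Equiv.Perm (Fin n)) : Prop :=
  ∀ i : ℕ, ∀ h : i + 1 < n,
    if i % 2 = 0 then c ⟨i + 1, h⟩ < c ⟨i, by omega⟩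
    else c ⟨i, by omega⟩ < c ⟨i + 1, h⟩

noncomputable def downPermCount (n : ℕ) : ℕ :=
  Nat.card {c : Equiv.Perm (Fin n) // IsDownPerm c}

lemma mk_eq {N a b : ℕ} (ha : a < N) (hb : b < N) (h : a = b) :
    (⟨a, ha⟩ : Fin N) = ⟨b, hb⟩ := by subst h; rfl

lemma alt_iff_down {n : ℕ} (c : Equiv.Perm (Fin n)) :
    IsAltPerm c ↔ IsDownPerm (c.trans Fin.revPerm) := by
  unfold IsAltPerm IsDownPerm
  refine forall_congr' fun i => forall_congr' fun h => ?_
  by_cases hp : i % 2 = 0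
  · simp [hp, Equiv.trans_apply, Fin.rev_lt_rev]
  · simp [hp, Equiv.trans_apply, Fin.rev_lt_rev]

lemma down_iff_alt {n : ℕ} (c : Equiv.Perm (Fin n)) :
    IsDownPerm c ↔ IsAltPerm (c.trans Fin.revPerm) := by
  unfold IsAltPerm IsDownPerm
  refine forall_congr' fun i => forall_congr' fun h => ?_
  by_cases hp : i % 2 = 0
  · simp [hp, Equiv.trans_apply, Fin.rev_lt_rev]
  · simp [hp, Equiv.trans_apply, Fin.rev_lt_rev]

lemma downPermCount_eq (n : ℕ) : downPermCount n = altPermCount n := by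
  apply Nat.card_congr
  refine ⟨fun c => ⟨c.1.trans Fin.revPerm, (down_iff_alt c.1).mp c.2⟩,
    fun c => ⟨c.1.trans Fin.revPerm, (alt_iff_down c.1).mp c.2⟩, ?_, ?_⟩
  · intro c
    apply Subtype.ext
    apply Equiv.ext
    intro x
    simp [Equiv.trans_apply, Fin.rev_rev]
  · intro c
    apply Subtype.ext
    apply Equiv.ext
    intro x
    simp [Equiv.trans_apply, Fin.rev_rev]

/-- The position of the minimum value in an alternating permutation of even size is even. -/
lemma pos_even {N : ℕ} (hN : N % 2 = 0) {c : Equiv.Perm (Fin N)} (hc : IsAltPerm c)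
    {p : ℕ} (hp : p < N) (h0 : (c ⟨p, hp⟩ : ℕ) = 0) : p % 2 = 0 := by
  by_contra hodd
  have hodd' : p % 2 = 1 := by omega
  rcases Nat.lt_or_ge (p + 1) N with h1 | h1
  · have key := hc p h1
    rw [if_neg (by omega)] at key
    rw [Fin.lt_def, h0] at key
    omega
  · have hp1 : 1 ≤ p := by omega
    have key := hc (p - 1) (by omega)
    rw [if_pos (by omega)] at key
    have e : c ⟨p - 1 + 1, by omega⟩ = c ⟨p, hp⟩ := by
      congr 1
      exact mk_eq (by omega) hp (by omega)
    rw [e, Fin.lt_def, h0] at key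
    omega

section Fiber

variable (p q : ℕ)

/-- the smallest element of `Fin (p+q+1)` -/
def z : Fin (p + q + 1) := ⟨0, by omega⟩

variable {p q}

lemma U_card (T : Finset (Fin (p + q + 1))) (hT : T.card = p ∧ z p q ∉ T) :
    ((univ.erase (z p q)) \ T).card = q := by
  rw [card_sdiff_of_subset (subset_erase.mpr ⟨subset_univ T, hT.2⟩),
    card_erase_of_mem (mem_univ _), card_univ, Fintype.card_fin, hT.1]
  omega

noncomputable def glue (T : Finset (Fin (p + q + 1))) (hT : T.card = p ∧ z p q ∉ T)
    (a : Equiv.Perm (Fin p)) (b : Equiv.Perm (Fin q)) : Fin (p + q + 1) → Fin (p + q + 1) :=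
  fun k =>
    if h : (k : ℕ) < p then (T.orderIsoOfFin hT.1 (a ⟨k, h⟩) : Fin (p + q + 1))
    else if h' : (k : ℕ) = p then z p q
    else ((((univ.erase (z p q)) \ T).orderIsoOfFin (U_card T hT))
      (b ⟨(k : ℕ) - (p + 1), by have := k.isLt; omega⟩) : Fin (p + q + 1))

lemma glue_apply_lt (T : Finset (Fin (p + q + 1))) (hT : T.card = p ∧ z p q ∉ T)
    (a : Equiv.Perm (Fin p)) (b : Equiv.Perm (Fin q)) (k : Fin (p + q + 1)) {l : ℕ}
    (hl : l < p) (hkl : (k : ℕ) = l) :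
    glue T hT a b k = (T.orderIsoOfFin hT.1 (a ⟨l, hl⟩) : Fin (p + q + 1)) := by
  simp only [glue]
  rw [dif_pos (show (k : ℕ) < p by omega)]
  have e : (⟨(k : ℕ), show (k : ℕ) < p by omega⟩ : Fin p) = ⟨l, hl⟩ :=
    mk_eq (by omega) hl hkl
  rw [e]

lemma glue_apply_mid (T : Finset (Fin (p + q + 1))) (hT : T.card = p ∧ z p q ∉ T)
    (a : Equiv.Perm (Fin p)) (b : Equiv.Perm (Fin q)) (k : Fin (p + q + 1))
    (h : (k : ℕ) = p) : glue T hT a b k = z p q := by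
  simp only [glue]
  rw [dif_neg (by omega), dif_pos h]

lemma glue_apply_gt (T : Finset (Fin (p + q + 1))) (hT : T.card = p ∧ z p q ∉ T)
    (a : Equiv.Perm (Fin p)) (b : Equiv.Perm (Fin q)) (k : Fin (p + q + 1)) {l : ℕ}
    (hl : l < q) (hkl : (k : ℕ) = p + 1 + l) :
    glue T hT a b k =
      ((((univ.erase (z p q)) \ T).orderIsoOfFin (U_card T hT)) (b ⟨l, hl⟩)
        : Fin (p + q + 1)) := by
  simp only [glue]
  rw [dif_neg (by omega), dif_neg (by omega)]
  have e : (⟨(k : ℕ) - (p + 1), by have := k.isLt; omega⟩ : Fin q) = ⟨l, hl⟩ :=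
    mk_eq (by omega) hl (by omega)
  rw [e]

lemma lt_of_mem_T {T : Finset (Fin (p + q + 1))} (hT : T.card = p ∧ z p q ∉ T)
    {t : Fin (p + q + 1)} (ht : t ∈ T) : z p q < t := by
  have hne : (t : ℕ) ≠ 0 := fun h0 =>
    hT.2 ((Fin.ext h0 : t = z p q) ▸ ht)
  rw [Fin.lt_def]
  show 0 < (t : ℕ)
  omega

lemma lt_of_mem_U {T : Finset (Fin (p + q + 1))}
    {t : Fin (p + q + 1)} (ht : t ∈ (univ.erase (z p q)) \ T) : z p q < t := by
  have h1 := (Finset.mem_erase.mp (Finset.mem_sdiff.mp ht).1).1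
  have hne : (t : ℕ) ≠ 0 := fun h0 => h1 (Fin.ext h0 : t = z p q)
  rw [Fin.lt_def]
  show 0 < (t : ℕ)
  omega

lemma glue_inj (T : Finset (Fin (p + q + 1))) (hT : T.card = p ∧ z p q ∉ T)
    (a : Equiv.Perm (Fin p)) (b : Equiv.Perm (Fin q)) :
    Function.Injective (glue T hT a b) := by
  intro x y hxy
  have hx := x.isLt
  have hy := y.isLt
  rcases lt_trichotomy (x : ℕ) p with h1 | h1 | h1 <;>
    rcases lt_trichotomy (y : ℕ) p with h2 | h2 | h2
  · -- both left
    rw [glue_apply_lt T hT a b x h1 rfl, glue_apply_lt T hT a b y h2 rfl] at hxy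
    have h3 := a.injective ((T.orderIsoOfFin hT.1).injective (Subtype.coe_injective hxy))
    have h4 := congrArg Fin.val h3
    exact Fin.ext (show (x : ℕ) = (y : ℕ) from h4)
  · -- left, mid
    rw [glue_apply_lt T hT a b x h1 rfl, glue_apply_mid T hT a b y h2] at hxy
    exact absurd (hxy ▸ Finset.coe_mem _) hT.2
  · -- left, right
    rw [glue_apply_lt T hT a b x h1 rfl,
      glue_apply_gt T hT a b y (show (y : ℕ) - (p + 1) < q by omega) (by omega)] at hxy
    have hmem := Finset.coe_mem ((((univ.erase (z p q)) \ T).orderIsoOfFin (U_card T hT))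
      (b ⟨(y : ℕ) - (p + 1), by omega⟩))
    rw [← hxy] at hmem
    exact absurd (Finset.coe_mem _) (Finset.mem_sdiff.mp hmem).2
  · -- mid, left
    rw [glue_apply_mid T hT a b x h1, glue_apply_lt T hT a b y h2 rfl] at hxy
    exact absurd (hxy ▸ Finset.coe_mem _) hT.2
  · exact Fin.ext (h1.trans h2.symm)
  · -- mid, right
    rw [glue_apply_mid T hT a b x h1,
      glue_apply_gt T hT a b y (show (y : ℕ) - (p + 1) < q by omega) (by omega)] at hxy
    have hmem := Finset.coe_mem ((((univ.erase (z p q)) \ T).orderIsoOfFin (U_card T hT))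
      (b ⟨(y : ℕ) - (p + 1), by omega⟩))
    rw [← hxy] at hmem
    exact absurd rfl (Finset.mem_erase.mp (Finset.mem_sdiff.mp hmem).1).1
  · -- right, left
    rw [glue_apply_lt T hT a b y h2 rfl,
      glue_apply_gt T hT a b x (show (x : ℕ) - (p + 1) < q by omega) (by omega)] at hxy
    have hmem := Finset.coe_mem ((((univ.erase (z p q)) \ T).orderIsoOfFin (U_card T hT))
      (b ⟨(x : ℕ) - (p + 1), by omega⟩))
    rw [hxy] at hmem
    exact absurd (Finset.coe_mem _) (Finset.mem_sdiff.mp hmem).2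
  · -- right, mid
    rw [glue_apply_mid T hT a b y h2,
      glue_apply_gt T hT a b x (show (x : ℕ) - (p + 1) < q by omega) (by omega)] at hxy
    have hmem := Finset.coe_mem ((((univ.erase (z p q)) \ T).orderIsoOfFin (U_card T hT))
      (b ⟨(x : ℕ) - (p + 1), by omega⟩))
    rw [hxy] at hmem
    exact absurd rfl (Finset.mem_erase.mp (Finset.mem_sdiff.mp hmem).1).1
  · -- both right
    rw [glue_apply_gt T hT a b x (show (x : ℕ) - (p + 1) < q by omega) (by omega),
      glue_apply_gt T hT a b y (show (y : ℕ) - (p + 1) < q by omega) (by omega)] at hxy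
    have h3 := b.injective
      ((((univ.erase (z p q)) \ T).orderIsoOfFin (U_card T hT)).injective
        (Subtype.coe_injective hxy))
    have h4' := congrArg Fin.val h3
    have h4 : (x : ℕ) - (p + 1) = (y : ℕ) - (p + 1) := h4'
    exact Fin.ext (by omega)

noncomputable def gluePerm (T : Finset (Fin (p + q + 1))) (hT : T.card = p ∧ z p q ∉ T)
    (a : Equiv.Perm (Fin p)) (b : Equiv.Perm (Fin q)) : Equiv.Perm (Fin (p + q + 1)) :=
  Equiv.ofBijective (glue T hT a b)
    (Finite.injective_iff_bijective.mp (glue_inj T hT a b))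

lemma gluePerm_apply (T : Finset (Fin (p + q + 1))) (hT : T.card = p ∧ z p q ∉ T)
    (a : Equiv.Perm (Fin p)) (b : Equiv.Perm (Fin q)) (k : Fin (p + q + 1)) :
    gluePerm T hT a b k = glue T hT a b k := rfl

lemma gluePerm_alt (T : Finset (Fin (p + q + 1))) (hT : T.card = p ∧ z p q ∉ T)
    {a : Equiv.Perm (Fin p)} {b : Equiv.Perm (Fin q)} (hp : p % 2 = 0)
    (ha : IsAltPerm a) (hb : IsDownPerm b) : IsAltPerm (gluePerm T hT a b) := by
  intro k hk
  show if k % 2 = 0 then glue T hT a b ⟨k, by omega⟩ < glue T hT a b ⟨k + 1, hk⟩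
    else glue T hT a b ⟨k + 1, hk⟩ < glue T hT a b ⟨k, by omega⟩
  by_cases hA : k + 1 < p
  · have key := ha k hA
    rw [glue_apply_lt T hT a b ⟨k, by omega⟩ (show k < p by omega) rfl,
      glue_apply_lt T hT a b ⟨k + 1, hk⟩ hA rfl]
    by_cases hk2 : k % 2 = 0
    · rw [if_pos hk2] at key ⊢
      rw [Subtype.coe_lt_coe, OrderIso.lt_iff_lt]
      exact key
    · rw [if_neg hk2] at key ⊢
      rw [Subtype.coe_lt_coe, OrderIso.lt_iff_lt]
      exact key
  · by_cases hB : k + 1 = p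
    · -- k = p - 1, which is odd
      rw [if_neg (by omega)]
      rw [glue_apply_mid T hT a b ⟨k + 1, hk⟩ (by exact hB), glue_apply_lt T hT a b ⟨k, by omega⟩ (show k < p by omega) rfl]
      exact lt_of_mem_T hT (Finset.coe_mem _)
    · by_cases hC : k = p
      · rw [if_pos (by omega)]
        rw [glue_apply_mid T hT a b ⟨k, by omega⟩ hC,
          glue_apply_gt T hT a b ⟨k + 1, hk⟩ (show 0 < q by omega)
            (by show k + 1 = p + 1 + 0; omega)]
        exact lt_of_mem_U (Finset.coe_mem _)
      · -- k > p
        have hk1 : p < k := by omega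
        have hl : k - (p + 1) + 1 < q := by omega
        have key := hb (k - (p + 1)) hl
        rw [glue_apply_gt T hT a b ⟨k, by omega⟩ (show k - (p + 1) < q by omega)
            (by show k = p + 1 + (k - (p + 1)); omega),
          glue_apply_gt T hT a b ⟨k + 1, hk⟩ (show k + 1 - (p + 1) < q by omega)
            (by show k + 1 = p + 1 + (k + 1 - (p + 1)); omega)]
        have e : (⟨k + 1 - (p + 1), show k + 1 - (p + 1) < q by omega⟩ : Fin q)
            = ⟨k - (p + 1) + 1, hl⟩ := mk_eq (by omega) hl (by omega)
        rw [e]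
        by_cases hk2 : k % 2 = 0
        · rw [if_pos hk2]
          rw [if_neg (by omega)] at key
          rw [Subtype.coe_lt_coe, OrderIso.lt_iff_lt]
          exact key
        · rw [if_neg hk2]
          rw [if_pos (by omega)] at key
          rw [Subtype.coe_lt_coe, OrderIso.lt_iff_lt]
          exact key

lemma glue_T_subset {T T' : Finset (Fin (p + q + 1))}
    {hT : T.card = p ∧ z p q ∉ T} {hT' : T'.card = p ∧ z p q ∉ T'}
    {a a' : Equiv.Perm (Fin p)} {b b' : Equiv.Perm (Fin q)}
    (h : ∀ k, glue T hT a b k = glue T' hT' a' b' k) : T ⊆ T' := by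
  intro t ht
  have hk0 : ((a.symm ((T.orderIsoOfFin hT.1).symm ⟨t, ht⟩) : Fin p) : ℕ) < p :=
    (a.symm ((T.orderIsoOfFin hT.1).symm ⟨t, ht⟩)).isLt
  have h1 : glue T hT a b
      ⟨((a.symm ((T.orderIsoOfFin hT.1).symm ⟨t, ht⟩) : Fin p) : ℕ), by omega⟩ = t := by
    rw [glue_apply_lt T hT a b _ hk0 rfl]
    simp only [Fin.eta, Equiv.apply_symm_apply, OrderIso.apply_symm_apply]
  have h2 : glue T' hT' a' b'
      ⟨((a.symm ((T.orderIsoOfFin hT.1).symm ⟨t, ht⟩) : Fin p) : ℕ), by omega⟩ ∈ T' := by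
    rw [glue_apply_lt T' hT' a' b' _ hk0 rfl]
    exact Finset.coe_mem _
  rw [← h1, h _]
  exact h2

section Unglue

variable (p q : ℕ) (c : Equiv.Perm (Fin (p + q + 1)))

noncomputable def Tof : Finset (Fin (p + q + 1)) :=
  image (fun k : Fin p => c ⟨(k : ℕ), by have := k.isLt; omega⟩) univ

lemma Tof_card : (Tof p q c).card = p := by
  rw [Tof, Finset.card_image_of_injective _ ?_, Finset.card_univ, Fintype.card_fin]
  intro u v h
  have h2 := congrArg Fin.val (c.injective h)
  exact Fin.ext (show (u : ℕ) = (v : ℕ) from h2)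

lemma Tof_notMem (hc0 : c ⟨p, by omega⟩ = z p q) : z p q ∉ Tof p q c := by
  intro hmem
  obtain ⟨u, _, hu⟩ := Finset.mem_image.mp hmem
  have h2 : ((⟨(u : ℕ), by have := u.isLt; omega⟩ : Fin (p + q + 1)) : ℕ)
      = ((⟨p, by omega⟩ : Fin (p + q + 1)) : ℕ) :=
    congrArg Fin.val (c.injective (hu.trans hc0.symm))
  have h3 : (u : ℕ) = p := h2
  have := u.isLt
  omega

lemma Tof_mem (l : Fin p) :
    c ⟨(l : ℕ), by have := l.isLt; omega⟩ ∈ Tof p q c :=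
  Finset.mem_image_of_mem _ (Finset.mem_univ l)

noncomputable def aof : Fin p → Fin p := fun l =>
  ((Tof p q c).orderIsoOfFin (Tof_card p q c)).symm
    ⟨c ⟨(l : ℕ), by have := l.isLt; omega⟩, Tof_mem p q c l⟩

lemma aof_inj : Function.Injective (aof p q c) := by
  intro u v h
  have h1 := congrArg Subtype.val (((Tof p q c).orderIsoOfFin (Tof_card p q c)).symm.injective h)
  have h2 := congrArg Fin.val (c.injective (Subtype.ext_iff.mp (Subtype.ext h1)))
  exact Fin.ext (show (u : ℕ) = (v : ℕ) from h2)

noncomputable def aPerm : Equiv.Perm (Fin p) :=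
  Equiv.ofBijective (aof p q c) (Finite.injective_iff_bijective.mp (aof_inj p q c))

lemma aPerm_apply (u : Fin p) :
    (((Tof p q c).orderIsoOfFin (Tof_card p q c)) (aPerm p q c u) : Fin (p + q + 1))
      = c ⟨(u : ℕ), by have := u.isLt; omega⟩ := by
  show (((Tof p q c).orderIsoOfFin (Tof_card p q c)) (aof p q c u) : Fin (p + q + 1)) = _
  simp only [aof]
  rw [OrderIso.apply_symm_apply]

lemma aPerm_lt_iff (u v : Fin p) :
    aPerm p q c u < aPerm p q c v ↔
      c ⟨(u : ℕ), by have := u.isLt; omega⟩ < c ⟨(v : ℕ), by have := v.isLt; omega⟩ := by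
  rw [← aPerm_apply p q c u, ← aPerm_apply p q c v, Subtype.coe_lt_coe, OrderIso.lt_iff_lt]

lemma aPerm_alt (hc : IsAltPerm c) : IsAltPerm (aPerm p q c) := by
  intro l hl
  have key := hc l (by omega)
  by_cases h2 : l % 2 = 0
  · rw [if_pos h2] at key ⊢
    exact (aPerm_lt_iff p q c _ _).mpr key
  · rw [if_neg h2] at key ⊢
    exact (aPerm_lt_iff p q c _ _).mpr key

lemma mem_U (hc0 : c ⟨p, by omega⟩ = z p q) (l : Fin q) :
    c ⟨p + 1 + (l : ℕ), by have := l.isLt; omega⟩ ∈ (univ.erase (z p q)) \ Tof p q c := by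
  rw [Finset.mem_sdiff, Finset.mem_erase]
  refine ⟨⟨?_, mem_univ _⟩, ?_⟩
  · intro h
    have h2 : ((⟨p + 1 + (l : ℕ), by have := l.isLt; omega⟩ : Fin (p + q + 1)) : ℕ)
        = ((⟨p, by omega⟩ : Fin (p + q + 1)) : ℕ) :=
      congrArg Fin.val (c.injective (h.trans hc0.symm))
    have h3 : p + 1 + (l : ℕ) = p := h2
    omega
  · intro h
    obtain ⟨u, _, hu⟩ := Finset.mem_image.mp h
    have h2' := congrArg Fin.val (c.injective hu)
    have h2 : (u : ℕ) = p + 1 + (l : ℕ) := h2'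
    have := u.isLt
    omega

noncomputable def bof (hc0 : c ⟨p, by omega⟩ = z p q) : Fin q → Fin q := fun l =>
  (((univ.erase (z p q)) \ Tof p q c).orderIsoOfFin
      (U_card (Tof p q c) ⟨Tof_card p q c, Tof_notMem p q c hc0⟩)).symm
    ⟨c ⟨p + 1 + (l : ℕ), by have := l.isLt; omega⟩, mem_U p q c hc0 l⟩

lemma bof_inj (hc0 : c ⟨p, by omega⟩ = z p q) : Function.Injective (bof p q c hc0) := by
  intro u v h
  have h1 := congrArg Subtype.val
    ((((univ.erase (z p q)) \ Tof p q c).orderIsoOfFin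
      (U_card (Tof p q c) ⟨Tof_card p q c, Tof_notMem p q c hc0⟩)).symm.injective h)
  have h2' := congrArg Fin.val (c.injective h1)
  have h2 : p + 1 + (u : ℕ) = p + 1 + (v : ℕ) := h2'
  exact Fin.ext (by omega)

noncomputable def bPerm (hc0 : c ⟨p, by omega⟩ = z p q) : Equiv.Perm (Fin q) :=
  Equiv.ofBijective (bof p q c hc0) (Finite.injective_iff_bijective.mp (bof_inj p q c hc0))

lemma bPerm_apply (hc0 : c ⟨p, by omega⟩ = z p q) (u : Fin q) :
    ((((univ.erase (z p q)) \ Tof p q c).orderIsoOfFin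
        (U_card (Tof p q c) ⟨Tof_card p q c, Tof_notMem p q c hc0⟩))
      (bPerm p q c hc0 u) : Fin (p + q + 1))
      = c ⟨p + 1 + (u : ℕ), by have := u.isLt; omega⟩ := by
  show ((((univ.erase (z p q)) \ Tof p q c).orderIsoOfFin
        (U_card (Tof p q c) ⟨Tof_card p q c, Tof_notMem p q c hc0⟩))
      (bof p q c hc0 u) : Fin (p + q + 1)) = _
  simp only [bof]
  rw [OrderIso.apply_symm_apply]

lemma bPerm_lt_iff (hc0 : c ⟨p, by omega⟩ = z p q) (u v : Fin q) :
    bPerm p q c hc0 u < bPerm p q c hc0 v ↔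
      c ⟨p + 1 + (u : ℕ), by have := u.isLt; omega⟩
        < c ⟨p + 1 + (v : ℕ), by have := v.isLt; omega⟩ := by
  rw [← bPerm_apply p q c hc0 u, ← bPerm_apply p q c hc0 v, Subtype.coe_lt_coe,
    OrderIso.lt_iff_lt]

lemma bPerm_down (hp : p % 2 = 0) (hc : IsAltPerm c) (hc0 : c ⟨p, by omega⟩ = z p q) :
    IsDownPerm (bPerm p q c hc0) := by
  intro l hl
  have key := hc (p + 1 + l) (by omega)

  by_cases h2 : l % 2 = 0
  · rw [if_pos h2]
    rw [if_neg (by omega)] at key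
    exact (bPerm_lt_iff p q c hc0 _ _).mpr key
  · rw [if_neg h2]
    rw [if_pos (by omega)] at key
    exact (bPerm_lt_iff p q c hc0 _ _).mpr key

lemma glue_unglue (hc0 : c ⟨p, by omega⟩ = z p q) (k : Fin (p + q + 1)) :
    glue (Tof p q c) ⟨Tof_card p q c, Tof_notMem p q c hc0⟩
      (aPerm p q c) (bPerm p q c hc0) k = c k := by
  rcases lt_trichotomy (k : ℕ) p with h | h | h
  · rw [glue_apply_lt _ _ _ _ k h rfl, aPerm_apply]
  · rw [glue_apply_mid _ _ _ _ k h, ← hc0]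
    exact congrArg c (Fin.ext h.symm)
  · have hq : (k : ℕ) - (p + 1) < q := by have := k.isLt; omega
    rw [glue_apply_gt _ _ _ _ k hq (by omega), bPerm_apply]
    exact congrArg c (Fin.ext (show p + 1 + ((k : ℕ) - (p + 1)) = (k : ℕ) by omega))

end Unglue

lemma fiber_card_aux (p q : ℕ) (hp : p % 2 = 0) :
    Nat.card {c : Equiv.Perm (Fin (p + q + 1)) //
        IsAltPerm c ∧ c ⟨p, by omega⟩ = z p q} =
      (p + q).choose p * altPermCount p * downPermCount q := by
  have hF : Function.Bijective
      (fun x : ({T : Finset (Fin (p + q + 1)) // T.card = p ∧ z p q ∉ T} ×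
          {a : Equiv.Perm (Fin p) // IsAltPerm a} ×
          {b : Equiv.Perm (Fin q) // IsDownPerm b}) =>
        (⟨gluePerm x.1.1 x.1.2 x.2.1.1 x.2.2.1,
          gluePerm_alt x.1.1 x.1.2 hp x.2.1.2 x.2.2.2,
          by rw [gluePerm_apply]; exact glue_apply_mid _ _ _ _ _ rfl⟩ :
          {c : Equiv.Perm (Fin (p + q + 1)) // IsAltPerm c ∧ c ⟨p, by omega⟩ = z p q})) := by
    constructor
    · rintro ⟨⟨T, hT⟩, ⟨a, ha⟩, ⟨b, hb⟩⟩ ⟨⟨T', hT'⟩, ⟨a', ha'⟩, ⟨b', hb'⟩⟩ hxy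
      simp only [Subtype.mk.injEq] at hxy
      have hpt : ∀ k, glue T hT a b k = glue T' hT' a' b' k := fun k => by
        rw [← gluePerm_apply, ← gluePerm_apply, hxy]
      have hTT : T = T' :=
        subset_antisymm (glue_T_subset hpt) (glue_T_subset (fun k => (hpt k).symm))
      subst hTT
      have haa : a = a' := by
        apply Equiv.ext
        intro u
        have h1 := hpt ⟨(u : ℕ), by have := u.isLt; omega⟩
        rw [glue_apply_lt T hT a b _ u.isLt rfl, glue_apply_lt T hT' a' b' _ u.isLt rfl] at h1
        exact (T.orderIsoOfFin hT.1).injective (Subtype.coe_injective h1)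
      have hbb : b = b' := by
        apply Equiv.ext
        intro u
        have h1 := hpt ⟨p + 1 + (u : ℕ), by have := u.isLt; omega⟩
        rw [glue_apply_gt T hT a b _ u.isLt rfl, glue_apply_gt T hT' a' b' _ u.isLt rfl] at h1
        exact (((univ.erase (z p q)) \ T).orderIsoOfFin (U_card T hT)).injective
          (Subtype.coe_injective h1)
      simp only [Prod.mk.injEq, Subtype.mk.injEq]
      exact ⟨trivial, haa, hbb⟩
    · rintro ⟨c, hc, hc0⟩
      refine ⟨⟨⟨Tof p q c, Tof_card p q c, Tof_notMem p q c hc0⟩,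
        ⟨aPerm p q c, aPerm_alt p q c hc⟩,
        ⟨bPerm p q c hc0, bPerm_down p q c hp hc hc0⟩⟩, ?_⟩
      apply Subtype.ext
      apply Equiv.ext
      intro k
      rw [gluePerm_apply]
      exact glue_unglue p q c hc0 k
  rw [← Nat.card_eq_of_bijective _ hF, Nat.card_prod, Nat.card_prod, ← mul_assoc]
  have hTcard : Nat.card {T : Finset (Fin (p + q + 1)) // T.card = p ∧ z p q ∉ T}
      = (p + q).choose p := by
    have e : {T : Finset (Fin (p + q + 1)) // T.card = p ∧ z p q ∉ T} ≃
        {T : Finset (Fin (p + q + 1)) // T ∈ powersetCard p (univ.erase (z p q))} :=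
      Equiv.subtypeEquivRight (fun T => by
        rw [mem_powersetCard, subset_erase]
        constructor
        · rintro ⟨h1, h2⟩
          exact ⟨⟨subset_univ T, h2⟩, h1⟩
        · rintro ⟨⟨_, h2⟩, h1⟩
          exact ⟨h1, h2⟩)
    rw [Nat.card_congr e, Nat.card_eq_fintype_card, Fintype.card_coe,
      card_powersetCard, card_erase_of_mem (mem_univ _), card_univ, Fintype.card_fin,
      Nat.add_sub_cancel]
  rw [hTcard]
  rfl

lemma fiber_card (N p q : ℕ) (hN : N = p + q + 1) (hp : p % 2 = 0) :
    Nat.card {c : Equiv.Perm (Fin N) //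
        IsAltPerm c ∧ c ⟨p, by omega⟩ = ⟨0, by omega⟩} =
      (p + q).choose p * altPermCount p * downPermCount q := by
  subst hN
  exact fiber_card_aux p q hp

lemma nat_card_sigma {ι : Type*} [Fintype ι] (g : ι → Type*) [∀ y, Finite (g y)] :
    Nat.card ((y : ι) × g y) = ∑ y, Nat.card (g y) := by
  classical
  letI : ∀ y, Fintype (g y) := fun y => Fintype.ofFinite _
  rw [Nat.card_eq_fintype_card, Fintype.card_sigma]
  exact Finset.sum_congr rfl fun y _ => (Nat.card_eq_fintype_card).symm

end Fiber

end AltAux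

open AltAux Finset in
/-- `A (2i) = ∑_{j=1}^{i} binom(2i-1, 2j-2) · A (2j-2) · A (2(i-j)+1)`. -/
theorem altPerm_convolution_even (i : ℕ) (hi : 1 ≤ i) :
    altPermCount (2 * i) =
      ∑ j ∈ Finset.Icc 1 i,
        Nat.choose (2 * i - 1) (2 * j - 2) * altPermCount (2 * j - 2) *
          altPermCount (2 * (i - j) + 1) := by
  classical
  have h2i : 0 < 2 * i := by omega
  have hlt : ∀ y : Fin i, 2 * (y : ℕ) < 2 * i := fun y => by have := y.isLt; omega
  have hdiv : ∀ c : {c : Equiv.Perm (Fin (2 * i)) // IsAltPerm c},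
      ((c.1.symm ⟨0, h2i⟩ : Fin (2 * i)) : ℕ) / 2 < i := fun c => by
    have := (c.1.symm ⟨0, h2i⟩).isLt; omega
  let f : {c : Equiv.Perm (Fin (2 * i)) // IsAltPerm c} → Fin i := fun c =>
    ⟨((c.1.symm ⟨0, h2i⟩ : Fin (2 * i)) : ℕ) / 2, hdiv c⟩
  have step1 : altPermCount (2 * i) =
      ∑ y : Fin i, Nat.card {x : {c : Equiv.Perm (Fin (2 * i)) // IsAltPerm c} // f x = y} := by
    show Nat.card {c : Equiv.Perm (Fin (2 * i)) // IsAltPerm c} = _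
    rw [← Nat.card_congr (Equiv.sigmaFiberEquiv f)]
    exact nat_card_sigma _
  have step2 : ∀ y : Fin i,
      Nat.card {x : {c : Equiv.Perm (Fin (2 * i)) // IsAltPerm c} // f x = y} =
      Nat.card {c : Equiv.Perm (Fin (2 * i)) //
        IsAltPerm c ∧ c ⟨2 * (y : ℕ), hlt y⟩ = ⟨0, h2i⟩} := by
    intro y
    apply Nat.card_congr
    refine Equiv.trans (Equiv.subtypeEquivRight
      (q := fun x : {c : Equiv.Perm (Fin (2 * i)) // IsAltPerm c} => x.1
        ⟨2 * (y : ℕ), hlt y⟩ = ⟨0, h2i⟩) ?_)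
      (Equiv.subtypeSubtypeEquivSubtypeInter
        (fun c : Equiv.Perm (Fin (2 * i)) => IsAltPerm c)
        (fun c => c ⟨2 * (y : ℕ), hlt y⟩ = ⟨0, h2i⟩))
    intro x
    have hev : ((x.1.symm ⟨0, h2i⟩ : Fin (2 * i)) : ℕ) % 2 = 0 := by
      refine pos_even (by omega) x.2 (x.1.symm ⟨0, h2i⟩).isLt ?_
      show ((x.1 (x.1.symm ⟨0, h2i⟩)) : ℕ) = 0
      rw [Equiv.apply_symm_apply]
    constructor
    · intro hf
      have h1 : ((x.1.symm ⟨0, h2i⟩ : Fin (2 * i)) : ℕ) / 2 = (y : ℕ) :=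
        congrArg Fin.val hf
      have h2 : x.1.symm ⟨0, h2i⟩
          = ⟨2 * (y : ℕ), hlt y⟩ :=
        Fin.ext (show ((x.1.symm ⟨0, h2i⟩ : Fin (2 * i)) : ℕ) = 2 * (y : ℕ) by omega)
      show x.1 ⟨2 * (y : ℕ), hlt y⟩ = ⟨0, h2i⟩
      rw [← h2, Equiv.apply_symm_apply]
    · intro hx
      have hx' : x.1 ⟨2 * (y : ℕ), hlt y⟩ = ⟨0, h2i⟩ := hx
      have h2 : x.1.symm ⟨0, h2i⟩ = ⟨2 * (y : ℕ), hlt y⟩ := by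
        rw [← hx', Equiv.symm_apply_apply]
      apply Fin.ext
      show ((x.1.symm ⟨0, h2i⟩ : Fin (2 * i)) : ℕ) / 2 = (y : ℕ)
      rw [h2]
      show 2 * (y : ℕ) / 2 = (y : ℕ)
      omega
  have step3 : ∀ y : Fin i, Nat.card {c : Equiv.Perm (Fin (2 * i)) //
      IsAltPerm c ∧ c ⟨2 * (y : ℕ), hlt y⟩ = ⟨0, h2i⟩} =
      (2 * i - 1).choose (2 * (y : ℕ)) * altPermCount (2 * (y : ℕ)) *
        altPermCount (2 * i - 2 * (y : ℕ) - 1) := by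
    intro y
    have hy := y.isLt
    have key := fiber_card (2 * i) (2 * (y : ℕ)) (2 * i - 2 * (y : ℕ) - 1)
      (by omega) (by omega)
    rw [show (2 * i - 1) = 2 * (y : ℕ) + (2 * i - 2 * (y : ℕ) - 1) by omega,
      ← downPermCount_eq (2 * i - 2 * (y : ℕ) - 1)]
    exact key
  rw [step1]
  rw [Finset.sum_congr rfl (fun y _ => (step2 y).trans (step3 y))]
  rw [Fin.sum_univ_eq_sum_range (fun k =>
    (2 * i - 1).choose (2 * k) * altPermCount (2 * k) * altPermCount (2 * i - 2 * k - 1)) i]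
  have hRHS : ∑ j ∈ Finset.Icc 1 i,
      (2 * i - 1).choose (2 * j - 2) * altPermCount (2 * j - 2) *
        altPermCount (2 * (i - j) + 1)
      = ∑ k ∈ Finset.range i,
        (2 * i - 1).choose (2 * k) * altPermCount (2 * k) *
          altPermCount (2 * i - 2 * k - 1) := by
    rw [← Finset.Ico_add_one_right_eq_Icc, Finset.sum_Ico_eq_sum_range,
      show i + 1 - 1 = i by omega]
    refine Finset.sum_congr rfl fun k hk => ?_
    have hk' : k < i := Finset.mem_range.mp hk
    rw [show 2 * (1 + k) - 2 = 2 * k by omega,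
      show 2 * (i - (1 + k)) + 1 = 2 * i - 2 * k - 1 by omega]
  rw [hRHS]
end

section
/- For every k ≥ 1, with the genomes forming a single M-shaped path with k adjacencies in G1 (extremities x_1,…,x_{2k}, Π1 = {{x_{2t-1},x_{2t}} : 1 ≤ t ≤ k}, Π2 = {{x_{2t},x_{2t+1}} : 1 ≤ t ≤ k-1}), assign to each most parsimonious SCJ scenario the permutation π of {1,…,2k-1} where π_{2t-1} is the position in the scenario of the step cutting {x_{2t-1},x_{2t}} and π_{2t} is the position of the step joining {x_{2t},x_{2t+1}}. This assignment is a bijection between the set of most parsimonious SCJ scenarios from G1 to G2 and the set of alternating permutations of size 2k-1 (i.e., permutations π with π_{2t-1} < π_{2t} and π_{2t+1} < π_{2t} for all applicable t). -/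
/-- A genome on an extremity type `V`: a finite set of adjacencies (unordered pairs of
distinct extremities) that are pairwise disjoint (a partial matching). -/
structure Genome (V : Type*) where
  adj : Finset (Sym2 V)
  not_isDiag : ∀ p ∈ adj, ¬ p.IsDiag
  disj : ∀ p ∈ adj, ∀ q ∈ adj, p ≠ q → ∀ x, x ∈ p → x ∉ q

instance {V : Type*} : Inhabited (Genome V) :=
  ⟨⟨∅, by simp, by simp⟩⟩

variable {V : Type*} [DecidableEq V]

/-- The step from `G` to `G'` is a cut removing the adjacency `p`. -/
def CutsAdj (G G' : Genome V) (p : Sym2 V) : Prop :=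
  p ∈ G.adj ∧ G'.adj = G.adj.erase p

/-- The step from `G` to `G'` is a join adding the adjacency `p`
(validity of `G'` forces `p` to be a pair of distinct, currently unmatched extremities). -/
def JoinsAdj (G G' : Genome V) (p : Sym2 V) : Prop :=
  p ∉ G.adj ∧ G'.adj = insert p G.adj

/-- A single SCJ operation. -/
def SCJStep (G G' : Genome V) : Prop :=
  ∃ p, CutsAdj G G' p ∨ JoinsAdj G G' p

/-- An SCJ scenario from `G1` to `G2`: a finite sequence of genomes starting at `G1`,
ending at `G2`, consecutive ones differing by a single SCJ operation.  A scenario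
represented by a list `L` has `L.length - 1` operations. -/
def IsScenario (G1 G2 : Genome V) (L : List (Genome V)) : Prop :=
  L.head? = some G1 ∧ L.getLast? = some G2 ∧ L.Chain' SCJStep

/-- The SCJ distance: the minimum number of operations in a scenario from `G1` to `G2`. -/
noncomputable def dSCJ (G1 G2 : Genome V) : ℕ :=
  sInf {n | ∃ L, IsScenario G1 G2 L ∧ L.length = n + 1}

/-- A most parsimonious SCJ scenario. -/
def IsMPS (G1 G2 : Genome V) (L : List (Genome V)) : Prop :=
  IsScenario G1 G2 L ∧ L.length = dSCJ G1 G2 + 1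

/-- The number of most parsimonious SCJ scenarios from `G1` to `G2`. -/
noncomputable def NumMPS (G1 G2 : Genome V) : ℕ :=
  {L | IsMPS G1 G2 L}.ncard

/-- The `i`-th step of the scenario `L` (steps indexed from `0`) cuts adjacency `p`. -/
def StepCut (L : List (Genome V)) (i : ℕ) (p : Sym2 V) : Prop :=
  i + 1 < L.length ∧ CutsAdj (L.getD i default) (L.getD (i + 1) default) p

/-- The `i`-th step of the scenario `L` (steps indexed from `0`) joins adjacency `p`. -/
def StepJoin (L : List (Genome V)) (i : ℕ) (p : Sym2 V) : Prop :=
  i + 1 < L.length ∧ JoinsAdj (L.getD i default) (L.getD (i + 1) default) p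

/-- For the M-shaped path with `k` adjacencies in `G1`, the permutation `π` of
`{1, …, 2k-1}` is the one assigned to the scenario `L`: in 1-based notation,
`π (2t-1)` is the position of the step cutting `{2t-1, 2t}` (for `1 ≤ t ≤ k`) and
`π (2t)` is the position of the step joining `{2t, 2t+1}` (for `1 ≤ t ≤ k-1`).
(Here both the entries of `π` and scenario step positions are 0-based, so the 1-based
index `r ∈ {1, …, 2k-1}` corresponds to `r - 1 : Fin (2k-1)`.) -/
def ScenPerm (k : ℕ) (L : List (Genome ℕ)) (π : Equiv.Perm (Fin (2 * k - 1))) : Prop :=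
  (∀ t : ℕ, 1 ≤ t → t ≤ k → ∀ h : 2 * t - 2 < 2 * k - 1,
    StepCut L (π ⟨2 * t - 2, h⟩ : Fin (2 * k - 1)) s(2 * t - 1, 2 * t)) ∧
  (∀ t : ℕ, 1 ≤ t → t ≤ k - 1 → ∀ h : 2 * t - 1 < 2 * k - 1,
    StepJoin L (π ⟨2 * t - 1, h⟩ : Fin (2 * k - 1)) s(2 * t, 2 * t + 1))


/-!
An SCJ step toggles a single adjacency, so it changes the symmetric difference `Π ∆ Π₂` of the
current and the target adjacencies by exactly one element, and every scenario from `G1` to `G2`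
has at least `|Π₁ ∆ Π₂|` steps. For the M-shaped path this bound `2k - 1` is attained, hence in
a most parsimonious scenario each of the `2k - 1` path edges is toggled exactly once (cut if it lies in `Π₁`, joined if it lies in `Π₂`) and the step positions
form a permutation. Consecutive edges share an extremity, so the cut of the `Π₁`-edge must come
before the join of its `Π₂`-neighbour: this is the alternating condition. Conversely, toggling the
edges in the order given by an alternating permutation never puts two adjacencies on one
extremity, and the scenario is determined by the order of its toggles.
-/

open Finset
open scoped symmDiff

theorem Finset.symmDiff_singleton_of_mem {α : Type*} [DecidableEq α] {s : Finset α} {a : α}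
    (h : a ∈ s) : s ∆ {a} = s.erase a := by
  ext x
  by_cases hx : x = a <;> simp [mem_symmDiff, hx, h]

theorem Finset.symmDiff_singleton_of_notMem {α : Type*} [DecidableEq α] {s : Finset α} {a : α}
    (h : a ∉ s) : s ∆ {a} = insert a s := by
  ext x
  by_cases hx : x = a <;> simp [mem_symmDiff, hx, h]

section ToggleSequence

variable {α : Type*} [DecidableEq α] {A : ℕ → Finset α} {p : ℕ → α} {m n : ℕ}

theorem symmDiff_subset_image_Ico (hA : ∀ i, m ≤ i → i < n → A (i + 1) = A i ∆ {p i})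
    (hmn : m ≤ n) : A m ∆ A n ⊆ (Ico m n).image p := by
  induction n, hmn using Nat.le_induction with
  | base => simp
  | succ n hmn ih =>
    rw [hA n hmn (by omega), ← symmDiff_assoc, ← insert_Ico_right_eq_Ico_add_one hmn,
      image_insert, insert_eq, union_comm]
    calc A m ∆ A n ∆ {p n} ⊆ A m ∆ A n ∪ {p n} := symmDiff_le_sup
      _ ⊆ _ := union_subset_union (ih fun i hi hin => hA i hi (by omega)) subset_rfl

theorem card_symmDiff_le_of_toggles (hA : ∀ i < n, A (i + 1) = A i ∆ {p i}) :
    #(A 0 ∆ A n) ≤ n :=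
  (card_le_card (symmDiff_subset_image_Ico (fun i _ hi => hA i hi) n.zero_le)).trans
    (card_image_le.trans (by simp))

theorem symmDiff_eq_image_range_of_card_eq (hA : ∀ i < n, A (i + 1) = A i ∆ {p i})
    (hcard : #(A 0 ∆ A n) = n) (hmn : m ≤ n) : A 0 ∆ A m = (range m).image p := by
  have hbefore : A 0 ∆ A m ⊆ (range m).image p := by
    rw [range_eq_Ico]
    exact symmDiff_subset_image_Ico (fun i _ hi => hA i (by omega)) m.zero_le
  have hafter : #(A m ∆ A n) ≤ n - m :=
    (card_le_card (symmDiff_subset_image_Ico (fun i _ hi => hA i hi) hmn)).trans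
      (card_image_le.trans (by simp))
  have htriangle : #(A 0 ∆ A n) ≤ #(A 0 ∆ A m) + #(A m ∆ A n) :=
    (card_le_card (symmDiff_triangle _ _ _)).trans (card_union_le _ _)
  refine eq_of_subset_of_card_le hbefore ?_
  calc #((range m).image p) ≤ m := card_image_le.trans (card_range m).le
    _ ≤ #(A 0 ∆ A m) := by omega

theorem injOn_of_card_symmDiff_eq (hA : ∀ i < n, A (i + 1) = A i ∆ {p i})
    (hcard : #(A 0 ∆ A n) = n) : Set.InjOn p (range n) := by
  rw [← card_image_iff, ← symmDiff_eq_image_range_of_card_eq hA hcard le_rfl, hcard, card_range]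

end ToggleSequence

@[ext] theorem Genome.ext {W : Type*} {G G' : Genome W} (h : G.adj = G'.adj) : G = G' := by
  cases G; cases G'; congr

section Scenarios

variable {G G' G1 G2 : Genome V} {p q : Sym2 V} {L : List (Genome V)}

def Toggles (G G' : Genome V) (p : Sym2 V) : Prop :=
  G'.adj = G.adj ∆ {p}

theorem Toggles.unique (h : Toggles G G' p) (h' : Toggles G G' q) : p = q :=
  singleton_injective (symmDiff_right_injective _ (h.symm.trans h'))

theorem cutsAdj_iff : CutsAdj G G' p ↔ Toggles G G' p ∧ p ∈ G.adj := by
  refine and_comm.trans (and_congr_left fun hp => ?_)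
  rw [Toggles, symmDiff_singleton_of_mem hp]

theorem joinsAdj_iff : JoinsAdj G G' p ↔ Toggles G G' p ∧ p ∉ G.adj := by
  refine and_comm.trans (and_congr_left fun hp => ?_)
  rw [Toggles, symmDiff_singleton_of_notMem hp]

theorem scjStep_iff : SCJStep G G' ↔ ∃ p, Toggles G G' p := by
  simp only [SCJStep, cutsAdj_iff, joinsAdj_iff, ← and_or_left, em, and_true]

def IsToggleSeq (L : List (Genome V)) (p : ℕ → Sym2 V) : Prop :=
  ∀ i, i + 1 < L.length → Toggles (L.getD i default) (L.getD (i + 1) default) (p i)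

theorem IsScenario.getD_zero (hL : IsScenario G1 G2 L) : L.getD 0 default = G1 := by
  rw [List.getD_eq_getElem?_getD, ← List.head?_eq_getElem?, hL.1, Option.getD_some]

theorem IsScenario.getD_length_sub_one (hL : IsScenario G1 G2 L) :
    L.getD (L.length - 1) default = G2 := by
  rw [List.getD_eq_getElem?_getD, ← List.getLast?_eq_getElem?, hL.2.1, Option.getD_some]

theorem IsScenario.exists_isToggleSeq [Nonempty V] (hL : IsScenario G1 G2 L) :
    ∃ p, IsToggleSeq L p := by
  have hstep : ∀ i, ∃ p, i + 1 < L.length →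
      Toggles (L.getD i default) (L.getD (i + 1) default) p := by
    intro i
    by_cases hi : i + 1 < L.length
    · obtain ⟨p, hp⟩ := scjStep_iff.mp (List.isChain_iff_getElem.mp hL.2.2 i hi)
      refine ⟨p, fun _ => ?_⟩
      rwa [List.getD_eq_getElem _ _ (by omega), List.getD_eq_getElem _ _ hi]
    · exact ⟨Sym2.diag (Classical.arbitrary V), fun h => absurd h hi⟩
  exact ⟨fun i => (hstep i).choose, fun i => (hstep i).choose_spec⟩

theorem IsScenario.card_symmDiff_lt_length [Nonempty V] (hL : IsScenario G1 G2 L) :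
    #(G1.adj ∆ G2.adj) < L.length := by
  obtain ⟨p, hp⟩ := hL.exists_isToggleSeq
  have hpos : 0 < L.length := List.length_pos_iff.mpr (by rintro rfl; simp [IsScenario] at hL)
  have := card_symmDiff_le_of_toggles (A := fun i => (L.getD i default).adj) (n := L.length - 1)
    (fun i hi => hp i (by omega))
  simp only [hL.getD_zero, hL.getD_length_sub_one] at this
  omega

theorem dSCJ_eq_card_symmDiff [Nonempty V] (hL : IsScenario G1 G2 L)
    (hlen : L.length = #(G1.adj ∆ G2.adj) + 1) : dSCJ G1 G2 = #(G1.adj ∆ G2.adj) := by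
  refine le_antisymm (Nat.sInf_le ⟨L, hL, hlen⟩) (le_csInf ⟨_, L, hL, hlen⟩ ?_)
  rintro n ⟨L', hL', hlen'⟩
  have := hL'.card_symmDiff_lt_length
  omega

end Scenarios

section TightScenarios

variable {G1 G2 : Genome V} {L L' : List (Genome V)} {p p' : ℕ → Sym2 V} {q : Sym2 V}
  {i j m : ℕ}

/-- A scenario attaining the lower bound `#(G1.adj ∆ G2.adj)` on the number of steps. -/
def IsTightScenario (G1 G2 : Genome V) (L : List (Genome V)) : Prop :=
  IsScenario G1 G2 L ∧ L.length = #(G1.adj ∆ G2.adj) + 1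

theorem IsTightScenario.getD_card (hL : IsTightScenario G1 G2 L) :
    L.getD #(G1.adj ∆ G2.adj) default = G2 := by
  simpa [hL.2] using hL.1.getD_length_sub_one

theorem IsTightScenario.adj_getD (hL : IsTightScenario G1 G2 L) (hp : IsToggleSeq L p)
    (hm : m ≤ #(G1.adj ∆ G2.adj)) : (L.getD m default).adj = G1.adj ∆ (range m).image p := by
  have h := symmDiff_eq_image_range_of_card_eq (A := fun i => (L.getD i default).adj)
    (fun i hi => hp i (by rw [hL.2]; omega)) (by simp only [hL.1.getD_zero, hL.getD_card]) hm
  simp only [hL.1.getD_zero] at h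
  rw [← h, symmDiff_symmDiff_cancel_left]

theorem IsTightScenario.injOn (hL : IsTightScenario G1 G2 L) (hp : IsToggleSeq L p) :
    Set.InjOn p (range #(G1.adj ∆ G2.adj)) :=
  injOn_of_card_symmDiff_eq (A := fun i => (L.getD i default).adj)
    (fun i hi => hp i (by rw [hL.2]; omega)) (by simp only [hL.1.getD_zero, hL.getD_card])

theorem IsTightScenario.image_range (hL : IsTightScenario G1 G2 L) (hp : IsToggleSeq L p) :
    (range #(G1.adj ∆ G2.adj)).image p = G1.adj ∆ G2.adj := by
  have h := congrArg (symmDiff G1.adj) (hL.adj_getD hp le_rfl)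
  rw [hL.getD_card, symmDiff_symmDiff_cancel_left] at h
  exact h.symm

theorem IsTightScenario.toggle_mem_adj_getD_iff (hL : IsTightScenario G1 G2 L)
    (hp : IsToggleSeq L p) (hi : i < #(G1.adj ∆ G2.adj)) (hm : m ≤ #(G1.adj ∆ G2.adj)) :
    p i ∈ (L.getD m default).adj ↔ (p i ∈ G1.adj ↔ m ≤ i) := by
  have htoggled : p i ∈ (range m).image p ↔ i < m := by
    refine ⟨fun h => ?_, fun h => mem_image_of_mem p (mem_range.mpr h)⟩
    obtain ⟨j, hj, hji⟩ := mem_image.mp h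
    rw [mem_range] at hj
    rwa [← hL.injOn hp (by simp; omega) (by simpa using hi) hji]
  rw [hL.adj_getD hp hm, mem_symmDiff, htoggled]
  by_cases h : p i ∈ G1.adj <;> simp [h]

theorem IsTightScenario.stepCut_iff (hL : IsTightScenario G1 G2 L) (hp : IsToggleSeq L p) :
    StepCut L i q ↔ i < #(G1.adj ∆ G2.adj) ∧ p i = q ∧ q ∈ G1.adj := by
  rw [StepCut, cutsAdj_iff, hL.2]
  constructor
  · rintro ⟨hi, ht, hq⟩
    obtain rfl := (hp i (by rw [hL.2]; exact hi)).unique ht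
    have hmem := (hL.toggle_mem_adj_getD_iff hp (by omega) (by omega)).mp hq
    exact ⟨by omega, rfl, by simpa using hmem⟩
  · rintro ⟨hi, rfl, hq⟩
    exact ⟨by omega, hp i (by rw [hL.2]; omega),
      (hL.toggle_mem_adj_getD_iff hp hi hi.le).mpr (iff_of_true hq le_rfl)⟩

theorem IsTightScenario.stepJoin_iff (hL : IsTightScenario G1 G2 L) (hp : IsToggleSeq L p) :
    StepJoin L i q ↔ i < #(G1.adj ∆ G2.adj) ∧ p i = q ∧ q ∉ G1.adj := by
  rw [StepJoin, joinsAdj_iff, hL.2]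
  constructor
  · rintro ⟨hi, ht, hq⟩
    obtain rfl := (hp i (by rw [hL.2]; exact hi)).unique ht
    have hmem := (hL.toggle_mem_adj_getD_iff hp (by omega) (by omega)).not.mp hq
    exact ⟨by omega, rfl, by simpa using hmem⟩
  · rintro ⟨hi, rfl, hq⟩
    exact ⟨by omega, hp i (by rw [hL.2]; omega),
      (hL.toggle_mem_adj_getD_iff hp hi hi.le).not.mpr (by simpa using hq)⟩

theorem IsTightScenario.cut_lt_join (hL : IsTightScenario G1 G2 L) (hp : IsToggleSeq L p)
    (hi : i < #(G1.adj ∆ G2.adj)) (hj : j < #(G1.adj ∆ G2.adj)) (hcut : p i ∈ G1.adj)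
    (hjoin : p j ∉ G1.adj) {v : V} (hvi : v ∈ p i) (hvj : v ∈ p j) : i < j := by
  have hne : i ≠ j := by rintro rfl; exact hjoin hcut
  -- otherwise both adjacencies would be present right after step `j`
  by_contra! hji
  have hmemj := (hL.toggle_mem_adj_getD_iff hp hj (m := j + 1) (by omega)).mpr (by simp [hjoin])
  have hmemi := (hL.toggle_mem_adj_getD_iff hp hi (m := j + 1) (by omega)).mpr
    (iff_of_true hcut (by omega))
  exact (L.getD (j + 1) default).disj _ hmemi _ hmemj (fun h => hjoin (h ▸ hcut)) v hvi hvj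

theorem IsTightScenario.eq_of_eqOn (hL : IsTightScenario G1 G2 L) (hp : IsToggleSeq L p)
    (hL' : IsTightScenario G1 G2 L') (hp' : IsToggleSeq L' p')
    (h : ∀ i < #(G1.adj ∆ G2.adj), p i = p' i) : L = L' := by
  refine List.ext_getElem (hL.2.trans hL'.2.symm) fun m hm hm' => ?_
  have hlen := hL.2
  rw [← List.getD_eq_getElem _ default hm, ← List.getD_eq_getElem _ default hm']
  ext1
  rw [hL.adj_getD hp (by omega), hL'.adj_getD hp' (by omega),
    image_congr fun i hi => h i (by simp at hi; omega)]

end TightScenarios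

theorem isScenario_ofFn {G : ℕ → Genome V} {n : ℕ} (hstep : ∀ m < n, SCJStep (G m) (G (m + 1))) :
    IsScenario (G 0) (G n) (List.ofFn fun i : Fin (n + 1) => G i) := by
  refine ⟨by simp, ?_, ?_⟩
  · rw [List.getLast?_eq_getElem?, List.length_ofFn, Nat.add_sub_cancel, List.getElem?_ofFn]
    simp
  · rw [List.Chain', List.isChain_ofFn]
    exact fun i hi => hstep i (by omega)

theorem getD_ofFn {W : Type*} [Inhabited W] (G : ℕ → W) {n m : ℕ} (hm : m ≤ n) :
    (List.ofFn fun i : Fin (n + 1) => G i).getD m default = G m := by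
  rw [List.getD_eq_getElem _ _ (by simp; omega), List.getElem_ofFn]

theorem existsUnique_perm_comp_eq {ι β : Type*} [Finite ι] {f g : ι → β}
    (hf : Function.Injective f) (hg : Function.Injective g) (hfg : ∀ r, ∃ i, f i = g r) :
    ∃! σ : Equiv.Perm ι, ∀ r, f (σ r) = g r := by
  choose s hs using hfg
  have hs_inj : Function.Injective s := fun a b hab => hg (by rw [← hs a, ← hs b, hab])
  refine ⟨Equiv.ofBijective s hs_inj.bijective_of_finite, hs, fun σ hσ => ?_⟩
  exact Equiv.ext fun r => hf (by rw [hσ, Equiv.ofBijective_apply, hs])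

theorem isAltPerm_iff {n : ℕ} {c : Equiv.Perm (Fin n)} :
    IsAltPerm c ↔ ∀ a b : Fin n, (a : ℕ) + 1 = b → (Even (a : ℕ) ↔ c a < c b) := by
  constructor
  · intro hc a b hab
    have h := hc a (by omega)
    rw [show (⟨a + 1, _⟩ : Fin n) = b from Fin.ext hab] at h
    rw [Nat.even_iff]
    split_ifs at h with ha
    · exact iff_of_true ha h
    · exact iff_of_false ha h.asymm
  · intro hc i hi
    have h := hc ⟨i, by omega⟩ ⟨i + 1, hi⟩ rfl
    rw [Nat.even_iff] at h
    split_ifs with hi2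
    · exact h.mp hi2
    · exact lt_of_le_of_ne (not_lt.mp (h.not.mp hi2)) (c.injective.ne (by simp))

theorem exists_isAltPerm (n : ℕ) : ∃ c : Equiv.Perm (Fin n), IsAltPerm c := by
  -- even positions are sent below `(n + 1) / 2`, odd ones above
  let f : Fin n → Fin n := fun r =>
    ⟨if (r : ℕ) % 2 = 0 then r / 2 else (n + 1) / 2 + r / 2, by split_ifs <;> omega⟩
  have hf : Function.Injective f := fun a b hab => by
    simp only [f, Fin.mk.injEq] at hab
    ext
    split_ifs at hab <;> omega
  refine ⟨Equiv.ofBijective f hf.bijective_of_finite, fun i hi => ?_⟩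
  simp only [Equiv.ofBijective_apply, f, Fin.mk_lt_mk]
  split_ifs <;> omega

section Path

/-- Edge `r` of the M-shaped path on extremities `1, 2, …`; in `mShaped_bijection` the even
edges form `Π₁` and the odd ones `Π₂`. -/
def pathEdge (r : ℕ) : Sym2 ℕ := s(r + 1, r + 2)

theorem pathEdge_injective : Function.Injective pathEdge := fun a b h => by
  simp only [pathEdge, Sym2.eq_iff] at h
  omega

theorem pathEdge_eq {r a b : ℕ} (ha : a = r + 1) (hb : b = r + 2) : s(a, b) = pathEdge r := by
  rw [ha, hb, pathEdge]

theorem mem_pathEdge {v r : ℕ} : v ∈ pathEdge r ↔ v = r + 1 ∨ v = r + 2 := Sym2.mem_iff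

variable {n : ℕ}

theorem fin_pathEdge_injective : Function.Injective fun r : Fin n => pathEdge r :=
  fun _ _ h => Fin.ext (pathEdge_injective h)

def evenPathEdges (n : ℕ) : Finset (Sym2 ℕ) :=
  (univ.filter fun r : Fin n => Even (r : ℕ)).image fun r : Fin n => pathEdge r

def oddPathEdges (n : ℕ) : Finset (Sym2 ℕ) :=
  (univ.filter fun r : Fin n => Odd (r : ℕ)).image fun r : Fin n => pathEdge r

theorem pathEdge_mem_evenPathEdges {r : Fin n} : pathEdge r ∈ evenPathEdges n ↔ Even (r : ℕ) := by
  simp [evenPathEdges, fin_pathEdge_injective.eq_iff]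

theorem symmDiff_evenPathEdges_oddPathEdges :
    evenPathEdges n ∆ oddPathEdges n = univ.image fun r : Fin n => pathEdge r := by
  rw [evenPathEdges, oddPathEdges, ← image_symmDiff _ _ fin_pathEdge_injective]
  congr 1
  ext r
  by_cases h : Even (r : ℕ) <;> simp [mem_symmDiff, h, ← Nat.not_even_iff_odd]

theorem card_symmDiff_evenPathEdges_oddPathEdges : #(evenPathEdges n ∆ oddPathEdges n) = n := by
  rw [symmDiff_evenPathEdges_oddPathEdges, card_image_of_injective _ fin_pathEdge_injective,
    card_univ, Fintype.card_fin]

theorem image_Icc_eq_evenPathEdges (k : ℕ) :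
    ((Icc 1 k).image fun t => s(2 * t - 1, 2 * t)) = evenPathEdges (2 * k - 1) := by
  ext q
  simp only [evenPathEdges, mem_image, mem_Icc, mem_filter, mem_univ, true_and, Nat.even_iff]
  constructor
  · rintro ⟨t, ht, rfl⟩
    exact ⟨⟨2 * t - 2, by omega⟩, by simp; omega,
      (pathEdge_eq (by simp; omega) (by simp; omega)).symm⟩
  · rintro ⟨r, hr, rfl⟩
    exact ⟨r / 2 + 1, by omega, pathEdge_eq (by omega) (by omega)⟩

theorem image_Icc_eq_oddPathEdges (k : ℕ) :
    ((Icc 1 (k - 1)).image fun t => s(2 * t, 2 * t + 1)) = oddPathEdges (2 * k - 1) := by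
  ext q
  simp only [oddPathEdges, mem_image, mem_Icc, mem_filter, mem_univ, true_and, Nat.odd_iff]
  constructor
  · rintro ⟨t, ht, rfl⟩
    exact ⟨⟨2 * t - 1, by omega⟩, by simp; omega,
      (pathEdge_eq (by simp; omega) (by simp; omega)).symm⟩
  · rintro ⟨r, hr, rfl⟩
    exact ⟨r / 2 + 1, by omega, pathEdge_eq (by omega) (by omega)⟩

end Path

section PathScenarios

variable {n : ℕ} {G1 G2 : Genome ℕ} {L : List (Genome ℕ)} {π : Equiv.Perm (Fin n)}
  {p : ℕ → Sym2 ℕ}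

/-- `ScenPerm` indexed by edges of the path: `r = 2t - 2` for the cut of `{2t-1, 2t}` and
`r = 2t - 1` for the join of `{2t, 2t+1}`. -/
def PathScenPerm (L : List (Genome ℕ)) (π : Equiv.Perm (Fin n)) : Prop :=
  ∀ r : Fin n, (Even (r : ℕ) → StepCut L (π r) (pathEdge r)) ∧
    (Odd (r : ℕ) → StepJoin L (π r) (pathEdge r))

theorem scenPerm_iff_pathScenPerm {k : ℕ} {π : Equiv.Perm (Fin (2 * k - 1))} :
    ScenPerm k L π ↔ PathScenPerm L π := by
  constructor
  · rintro ⟨hcut, hjoin⟩ r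
    refine ⟨fun hr => ?_, fun hr => ?_⟩
    · rw [Nat.even_iff] at hr
      have h := hcut (r / 2 + 1) (by omega) (by omega) (by omega)
      rwa [show (⟨2 * (r / 2 + 1) - 2, _⟩ : Fin (2 * k - 1)) = r from Fin.ext (by simp; omega),
        pathEdge_eq (r := r) (by omega) (by omega)] at h
    · rw [Nat.odd_iff] at hr
      have h := hjoin ((r + 1) / 2) (by omega) (by omega) (by omega)
      rwa [show (⟨2 * ((r + 1) / 2) - 1, _⟩ : Fin (2 * k - 1)) = r from Fin.ext (by simp; omega),
        pathEdge_eq (r := r) (by omega) (by omega)] at h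
  · intro h
    refine ⟨fun t ht1 ht2 hb => ?_, fun t ht1 ht2 hb => ?_⟩
    · rw [pathEdge_eq (r := 2 * t - 2) (by omega) (by omega)]
      exact (h ⟨2 * t - 2, hb⟩).1 (by rw [Nat.even_iff]; simp; omega)
    · rw [pathEdge_eq (r := 2 * t - 1) (by omega) (by omega)]
      exact (h ⟨2 * t - 1, hb⟩).2 (by rw [Nat.odd_iff]; simp; omega)

theorem card_symmDiff_of_path (hG1 : G1.adj = evenPathEdges n) (hG2 : G2.adj = oddPathEdges n) :
    #(G1.adj ∆ G2.adj) = n := by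
  rw [hG1, hG2, card_symmDiff_evenPathEdges_oddPathEdges]

theorem pathScenPerm_iff (hG1 : G1.adj = evenPathEdges n) (hG2 : G2.adj = oddPathEdges n)
    (hL : IsTightScenario G1 G2 L) (hp : IsToggleSeq L p) :
    PathScenPerm L π ↔ ∀ r, p (π r) = pathEdge r := by
  simp only [PathScenPerm, hL.stepCut_iff hp, hL.stepJoin_iff hp, card_symmDiff_of_path hG1 hG2,
    (π _).isLt, true_and]
  simp only [hG1, pathEdge_mem_evenPathEdges, ← Nat.not_even_iff_odd]
  refine forall_congr' fun r => ?_
  by_cases h : Even (r : ℕ) <;> simp [h]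

theorem IsAltPerm.not_and_of_succ_eq (hπ : IsAltPerm π) {a b : Fin n} (hab : (a : ℕ) + 1 = b)
    (m : ℕ) : ¬((Even (a : ℕ) ↔ m ≤ π a) ∧ (Even (b : ℕ) ↔ m ≤ π b)) := by
  rintro ⟨ha, hb⟩
  have halt := isAltPerm_iff.mp hπ a b hab
  have hne : (π a : ℕ) ≠ π b := fun h => by
    have := π.injective (Fin.ext h)
    omega
  rw [← hab, Nat.even_add_one] at hb
  rw [Fin.lt_def] at halt
  by_cases he : Even (a : ℕ) <;>
    simp only [he, true_iff, false_iff, not_true_eq_false, not_false_eq_true] at ha hb halt <;>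
    omega

/-- At time `m`, an even edge `r` is present until it is cut at time `π r`, an odd edge from
the time `π r` at which it is joined on. -/
def pathGenome (π : Equiv.Perm (Fin n)) (hπ : IsAltPerm π) (m : ℕ) : Genome ℕ where
  adj := (univ.filter fun r : Fin n => (Even (r : ℕ) ↔ m ≤ π r)).image fun r : Fin n => pathEdge r
  not_isDiag := by simp [pathEdge]
  disj := by
    simp only [mem_image, mem_filter, mem_univ, true_and]
    rintro _ ⟨a, ha, rfl⟩ _ ⟨b, hb, rfl⟩ hne v hva hvb
    rw [mem_pathEdge] at hva hvb
    have hab : (a : ℕ) ≠ b := fun h => hne (by rw [Fin.ext h])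
    rcases (by omega : (a : ℕ) + 1 = b ∨ (b : ℕ) + 1 = a) with h | h
    exacts [hπ.not_and_of_succ_eq h m ⟨ha, hb⟩, hπ.not_and_of_succ_eq h m ⟨hb, ha⟩]

theorem pathGenome_toggles (hπ : IsAltPerm π) {m : ℕ} (hm : m < n) :
    Toggles (pathGenome π hπ m) (pathGenome π hπ (m + 1)) (pathEdge (π.symm ⟨m, hm⟩)) := by
  rw [Toggles, pathGenome, pathGenome, ← image_singleton (fun r : Fin n => pathEdge r),
    ← image_symmDiff _ _ fin_pathEdge_injective]
  refine congrArg (image fun r : Fin n => pathEdge r) (ext fun r => ?_)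
  simp only [mem_filter, mem_univ, true_and, mem_symmDiff, mem_singleton, Equiv.eq_symm_apply,
    Fin.ext_iff]
  by_cases h : Even (r : ℕ) <;> simp only [h, true_iff, false_iff, not_le] <;> omega

def pathToggle (π : Equiv.Perm (Fin n)) (i : ℕ) : Sym2 ℕ :=
  if h : i < n then pathEdge (π.symm ⟨i, h⟩) else pathEdge i

theorem pathToggle_apply (r : Fin n) : pathToggle π (π r) = pathEdge r := by
  simp [pathToggle]

def pathScenario (π : Equiv.Perm (Fin n)) (hπ : IsAltPerm π) : List (Genome ℕ) :=
  List.ofFn fun i : Fin (n + 1) => pathGenome π hπ i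

theorem pathScenario_isToggleSeq (hπ : IsAltPerm π) :
    IsToggleSeq (pathScenario π hπ) (pathToggle π) := by
  intro i hi
  simp only [pathScenario, List.length_ofFn] at hi
  rw [pathScenario, getD_ofFn _ (by omega), getD_ofFn _ (by omega), pathToggle, dif_pos (by omega)]
  exact pathGenome_toggles hπ _

theorem pathScenario_isTightScenario (hπ : IsAltPerm π) (hG1 : G1.adj = evenPathEdges n)
    (hG2 : G2.adj = oddPathEdges n) : IsTightScenario G1 G2 (pathScenario π hπ) := by
  have hstart : pathGenome π hπ 0 = G1 := by
    ext1
    simp [hG1, pathGenome, evenPathEdges]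
  have hend : pathGenome π hπ n = G2 := by
    ext1
    rw [hG2, pathGenome, oddPathEdges]
    refine congrArg (image fun r : Fin n => pathEdge r) (ext fun r => ?_)
    simp [not_le.mpr (π r).isLt, ← Nat.not_even_iff_odd]
  refine ⟨?_, by simp [pathScenario, card_symmDiff_of_path hG1 hG2]⟩
  rw [← hstart, ← hend]
  exact isScenario_ofFn fun m hm => scjStep_iff.mpr ⟨_, pathGenome_toggles hπ hm⟩

theorem dSCJ_of_path (hG1 : G1.adj = evenPathEdges n) (hG2 : G2.adj = oddPathEdges n) :
    dSCJ G1 G2 = n := by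
  obtain ⟨π, hπ⟩ := exists_isAltPerm n
  have hT := pathScenario_isTightScenario hπ hG1 hG2
  rw [dSCJ_eq_card_symmDiff hT.1 hT.2, card_symmDiff_of_path hG1 hG2]

theorem isMPS_iff_isTightScenario (hG1 : G1.adj = evenPathEdges n)
    (hG2 : G2.adj = oddPathEdges n) : IsMPS G1 G2 L ↔ IsTightScenario G1 G2 L := by
  rw [IsMPS, IsTightScenario, dSCJ_of_path hG1 hG2, card_symmDiff_of_path hG1 hG2]

theorem existsUnique_pathScenPerm (hG1 : G1.adj = evenPathEdges n)
    (hG2 : G2.adj = oddPathEdges n) (hL : IsMPS G1 G2 L) :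
    ∃! π : Equiv.Perm (Fin n), PathScenPerm L π := by
  have hT := (isMPS_iff_isTightScenario hG1 hG2).mp hL
  have hcard := card_symmDiff_of_path hG1 hG2
  obtain ⟨p, hp⟩ := hT.1.exists_isToggleSeq
  rw [existsUnique_congr fun π => pathScenPerm_iff hG1 hG2 hT hp]
  refine existsUnique_perm_comp_eq (f := fun i : Fin n => p i)
    (fun a b h => Fin.ext (hT.injOn hp (by simp [hcard]) (by simp [hcard]) h))
    fin_pathEdge_injective fun r => ?_
  have hr : pathEdge r ∈ G1.adj ∆ G2.adj := by
    rw [hG1, hG2, symmDiff_evenPathEdges_oddPathEdges]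
    exact mem_image_of_mem _ (mem_univ r)
  rw [← hT.image_range hp, hcard] at hr
  obtain ⟨i, hi, hpi⟩ := mem_image.mp hr
  exact ⟨⟨i, mem_range.mp hi⟩, hpi⟩

theorem PathScenPerm.isAltPerm (hG1 : G1.adj = evenPathEdges n) (hG2 : G2.adj = oddPathEdges n)
    (hL : IsMPS G1 G2 L) (hπ : PathScenPerm L π) : IsAltPerm π := by
  have hT := (isMPS_iff_isTightScenario hG1 hG2).mp hL
  have hcard := card_symmDiff_of_path hG1 hG2
  obtain ⟨p, hp⟩ := hT.1.exists_isToggleSeq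
  have he := (pathScenPerm_iff hG1 hG2 hT hp).mp hπ
  have hcut_first : ∀ a b : Fin n, (a : ℕ) + 1 = b ∨ (b : ℕ) + 1 = a → Even (a : ℕ) →
      π a < π b := by
    intro a b hab ha
    have hb : ¬ Even (b : ℕ) := by
      rw [Nat.even_iff] at ha ⊢
      omega
    refine hT.cut_lt_join hp (by simp [hcard]) (by simp [hcard])
      (by rw [he, hG1, pathEdge_mem_evenPathEdges]; exact ha)
      (by rw [he, hG1, pathEdge_mem_evenPathEdges]; exact hb) (v := max (a : ℕ) b + 1)
      (by rw [he, mem_pathEdge]; omega) (by rw [he, mem_pathEdge]; omega)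
  refine isAltPerm_iff.mpr fun a b hab => ⟨hcut_first a b (Or.inl hab), fun hlt => ?_⟩
  by_contra ha
  have hb : Even (b : ℕ) := by
    rw [Nat.even_iff] at ha ⊢
    omega
  exact (hcut_first b a (Or.inr hab) hb).asymm hlt

theorem existsUnique_isMPS_pathScenPerm (hG1 : G1.adj = evenPathEdges n)
    (hG2 : G2.adj = oddPathEdges n) (hπ : IsAltPerm π) :
    ∃! L, IsMPS G1 G2 L ∧ PathScenPerm L π := by
  have hT := pathScenario_isTightScenario hπ hG1 hG2
  refine ⟨pathScenario π hπ, ⟨(isMPS_iff_isTightScenario hG1 hG2).mpr hT,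
    (pathScenPerm_iff hG1 hG2 hT (pathScenario_isToggleSeq hπ)).mpr pathToggle_apply⟩, ?_⟩
  rintro L ⟨hL, hLπ⟩
  have hT' := (isMPS_iff_isTightScenario hG1 hG2).mp hL
  obtain ⟨p, hp⟩ := hT'.1.exists_isToggleSeq
  have he := (pathScenPerm_iff hG1 hG2 hT' hp).mp hLπ
  refine hT'.eq_of_eqOn hp hT (pathScenario_isToggleSeq hπ) fun i hi => ?_
  rw [card_symmDiff_of_path hG1 hG2] at hi
  obtain ⟨r, rfl⟩ : ∃ r : Fin n, (π r : ℕ) = i := ⟨π.symm ⟨i, hi⟩, by simp⟩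
  rw [he, pathToggle_apply]

end PathScenarios

theorem mShaped_bijection_general (k : ℕ) (G1 G2 : Genome ℕ)
    (h1 : G1.adj = (Finset.Icc 1 k).image fun t => s(2 * t - 1, 2 * t))
    (h2 : G2.adj = (Finset.Icc 1 (k - 1)).image fun t => s(2 * t, 2 * t + 1)) :
    (∀ L, IsMPS G1 G2 L →
      ∃! π : Equiv.Perm (Fin (2 * k - 1)), ScenPerm k L π) ∧
    (∀ L, IsMPS G1 G2 L → ∀ π : Equiv.Perm (Fin (2 * k - 1)),
      ScenPerm k L π → IsAltPerm π) ∧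
    (∀ π : Equiv.Perm (Fin (2 * k - 1)), IsAltPerm π →
      ∃! L, IsMPS G1 G2 L ∧ ScenPerm k L π) := by
  rw [image_Icc_eq_evenPathEdges] at h1
  rw [image_Icc_eq_oddPathEdges] at h2
  simp only [scenPerm_iff_pathScenPerm]
  exact ⟨fun L hL => existsUnique_pathScenPerm h1 h2 hL,
    fun L hL π hπ => hπ.isAltPerm h1 h2 hL,
    fun π hπ => existsUnique_isMPS_pathScenPerm h1 h2 hπ⟩

/-- For the M-shaped path with `k ≥ 1` adjacencies in `G1`
(extremities `1, …, 2k`, `Π1 = {{2t-1, 2t} : 1 ≤ t ≤ k}`,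
`Π2 = {{2t, 2t+1} : 1 ≤ t ≤ k-1}`), assigning to each most parsimonious SCJ scenario the
permutation recording the positions of its cut and join steps is a well-defined bijection
between the most parsimonious SCJ scenarios from `G1` to `G2` and the alternating
permutations of size `2k-1`. -/
theorem mShaped_bijection (k : ℕ) (hk : 1 ≤ k) (G1 G2 : Genome ℕ)
    (h1 : G1.adj = (Finset.Icc 1 k).image fun t => s(2 * t - 1, 2 * t))
    (h2 : G2.adj = (Finset.Icc 1 (k - 1)).image fun t => s(2 * t, 2 * t + 1)) :
    (∀ L, IsMPS G1 G2 L →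
      ∃! π : Equiv.Perm (Fin (2 * k - 1)), ScenPerm k L π) ∧
    (∀ L, IsMPS G1 G2 L → ∀ π : Equiv.Perm (Fin (2 * k - 1)),
      ScenPerm k L π → IsAltPerm π) ∧
    (∀ π : Equiv.Perm (Fin (2 * k - 1)), IsAltPerm π →
      ∃! L, IsMPS G1 G2 L ∧ ScenPerm k L π) :=
  mShaped_bijection_general k G1 G2 h1 h2
end

section
/- Let T be a rooted binary tree whose leaves carry Boolean labels. Define the Fitch set B(v) ⊆ {0,1} at each node by: B(leaf) = {its label}, and B(u) = B(v1) ∩ B(v2) if this intersection is nonempty, otherwise B(u) = B(v1) ∪ B(v2), where v1, v2 are the children of u. Define the Sankoff costs s0(v), s1(v) ∈ ℕ ∪ {∞} by: at a leaf with label b, sb = 0 and s(1−b) = ∞; at an internal node u with children v1, v2, s1(u) = min(s1(v1), s0(v1)+1) + min(s1(v2), s0(v2)+1) and s0(u) = min(s0(v1), s1(v1)+1) + min(s0(v2), s1(v2)+1). Then for every node v of T, B(v) = { b ∈ {0,1} : sb(v) = min(s0(v), s1(v)) }; in particular B(v) = {0,1} if and only if s0(v) = s1(v). -/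
/-- A rooted binary tree with Boolean leaf labels: either a leaf carrying a label in
`{0, 1}` (modelled by `Bool`), or an internal node with exactly two children. -/
inductive BTree : Type
  | leaf : Bool → BTree
  | node : BTree → BTree → BTree

/-- The Fitch set `B(v) ⊆ {0,1}`: at a leaf it is the singleton of the label; at an
internal node it is the intersection of the children's sets if nonempty, and their union
otherwise. -/
def fitchSet : BTree → Finset Bool
  | .leaf b => {b}
  | .node l r =>
      if (fitchSet l ∩ fitchSet r).Nonempty then fitchSet l ∩ fitchSet r
      else fitchSet l ∪ fitchSet r

/-- The Sankoff cost `s_b(v) ∈ ℕ ∪ {∞}`: at a leaf with label `b'`, it is `0` if `b = b'`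
and `∞` otherwise; at an internal node with children `v₁, v₂`,
`s_b(u) = min(s_b(v₁), s_{¬b}(v₁) + 1) + min(s_b(v₂), s_{¬b}(v₂) + 1)`. -/
noncomputable def sankoff (b : Bool) : BTree → ℕ∞
  | .leaf b' => if b = b' then 0 else ⊤
  | .node l r =>
      min (sankoff b l) (sankoff (!b) l + 1) + min (sankoff b r) (sankoff (!b) r + 1)

/-! Call a state `b` optimal at `T` if `sankoff b T` is minimal. At every tree the minimal cost
`m` is finite and the Fitch set is exactly the set of optimal states. Granting this for the
children `l, r` of a node, a child `t` contributes `m_t` to `s_b` when `b` is optimal at `t` and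
`m_t + 1` otherwise (paying one substitution on the edge to an optimal state), so
`s_b(u) = m_l + m_r + #{children whose Fitch set misses b}`. Fitch's rule selects exactly the
minimisers of this miss count: the common states if there are any, and otherwise every state
in the union. -/

section FitchMerge

variable {α : Type*} [DecidableEq α]

def fitchMerge (A B : Finset α) : Finset α :=
  if (A ∩ B).Nonempty then A ∩ B else A ∪ B

def missCount (A B : Finset α) (x : α) : ℕ :=
  (if x ∈ A then 0 else 1) + (if x ∈ B then 0 else 1)

lemma fitchMerge_nonempty {A : Finset α} (B : Finset α) (hA : A.Nonempty) :
    (fitchMerge A B).Nonempty := by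
  unfold fitchMerge
  split_ifs with h
  exacts [h, hA.mono Finset.subset_union_left]

lemma missCount_eq_zero_iff (A B : Finset α) (x : α) : missCount A B x = 0 ↔ x ∈ A ∩ B := by
  unfold missCount
  split_ifs <;> simp_all

lemma missCount_le_one_iff (A B : Finset α) (x : α) : missCount A B x ≤ 1 ↔ x ∈ A ∪ B := by
  unfold missCount
  split_ifs <;> simp_all

lemma mem_fitchMerge_iff {A : Finset α} (B : Finset α) (hA : A.Nonempty) (x : α) :
    x ∈ fitchMerge A B ↔ ∀ y, missCount A B x ≤ missCount A B y := by
  by_cases h : (A ∩ B).Nonempty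
  · obtain ⟨z, hz⟩ := h
    rw [fitchMerge, if_pos ⟨z, hz⟩, ← missCount_eq_zero_iff]
    refine ⟨fun hx y => hx ▸ Nat.zero_le _, fun hx => ?_⟩
    exact Nat.le_zero.1 ((hx z).trans ((missCount_eq_zero_iff A B z).2 hz).le)
  · obtain ⟨a, ha⟩ := hA
    have hpos : ∀ y, 1 ≤ missCount A B y := fun y =>
      Nat.one_le_iff_ne_zero.2 fun hy => h ⟨y, (missCount_eq_zero_iff A B y).1 hy⟩
    rw [fitchMerge, if_neg h, ← missCount_le_one_iff]
    refine ⟨fun hx y => hx.trans (hpos y), fun hx => (hx a).trans ?_⟩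
    exact (missCount_le_one_iff A B a).2 (Finset.mem_union_left B ha)

end FitchMerge

lemma eq_min_false_true_iff {α : Type*} [LinearOrder α] (c : Bool → α) (b : Bool) :
    c b = min (c false) (c true) ↔ ∀ b', c b ≤ c b' := by
  rw [Bool.forall_bool, ← le_min_iff]
  refine ⟨le_of_eq, fun h => h.antisymm ?_⟩
  cases b
  exacts [min_le_left _ _, min_le_right _ _]

namespace BTree

noncomputable def minCost (T : BTree) : ℕ∞ :=
  min (sankoff false T) (sankoff true T)

def IsFitchOptimal (T : BTree) : Prop :=
  T.minCost ≠ ⊤ ∧ ∀ b, b ∈ fitchSet T ↔ ∀ b', sankoff b T ≤ sankoff b' T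

lemma minCost_eq_of_forall_le {T : BTree} {b : Bool} (h : ∀ b', sankoff b T ≤ sankoff b' T) :
    T.minCost = sankoff b T :=
  ((eq_min_false_true_iff (sankoff · T) b).2 h).symm

lemma fitchSet_node (l r : BTree) :
    fitchSet (node l r) = fitchMerge (fitchSet l) (fitchSet r) := rfl

lemma fitchSet_nonempty (T : BTree) : (fitchSet T).Nonempty := by
  induction T with
  | leaf b => exact Finset.singleton_nonempty b
  | node l r ihl _ => exact fitchMerge_nonempty _ ihl

lemma min_sankoff_not_add_one {t : BTree}
    (ht : ∀ b, b ∈ fitchSet t ↔ ∀ b', sankoff b t ≤ sankoff b' t) (b : Bool) :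
    min (sankoff b t) (sankoff (!b) t + 1) = t.minCost + if b ∈ fitchSet t then 0 else 1 := by
  by_cases hb : b ∈ fitchSet t
  · have hopt := (ht b).1 hb
    rw [if_pos hb, add_zero, min_eq_left ((hopt !b).trans le_self_add),
      minCost_eq_of_forall_le hopt]
  · obtain ⟨c, hc⟩ := fitchSet_nonempty t
    obtain rfl : c = !b := Bool.eq_not_of_ne (ne_of_mem_of_not_mem hc hb)
    have hopt := (ht (!b)).1 hc
    have hlt : sankoff (!b) t < sankoff b t :=
      not_le.1 fun hle => hb ((ht b).2 fun b' => hle.trans (hopt b'))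
    rw [if_neg hb, min_eq_right (Order.add_one_le_of_lt hlt), minCost_eq_of_forall_le hopt]

lemma sankoff_node {l r : BTree} (hl : l.IsFitchOptimal) (hr : r.IsFitchOptimal) (b : Bool) :
    sankoff b (node l r) =
      l.minCost + r.minCost + missCount (fitchSet l) (fitchSet r) b := by
  rw [sankoff, min_sankoff_not_add_one hl.2, min_sankoff_not_add_one hr.2, missCount]
  push_cast
  ring

lemma isFitchOptimal_node {l r : BTree} (hl : l.IsFitchOptimal) (hr : r.IsFitchOptimal) :
    (node l r).IsFitchOptimal := by
  have hfin : l.minCost + r.minCost ≠ ⊤ := WithTop.add_ne_top.2 ⟨hl.1, hr.1⟩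
  refine ⟨ne_top_of_le_ne_top ?_ (min_le_left _ _), fun b => ?_⟩
  · rw [sankoff_node hl hr]
    exact WithTop.add_ne_top.2 ⟨hfin, ENat.natCast_ne_top _⟩
  · simp only [fitchSet_node, mem_fitchMerge_iff _ (fitchSet_nonempty l), sankoff_node hl hr,
      ENat.add_le_add_iff_left hfin, Nat.cast_le]

lemma isFitchOptimal (T : BTree) : T.IsFitchOptimal := by
  induction T with
  | leaf b => cases b <;> simp [IsFitchOptimal, minCost, fitchSet, sankoff]
  | node l r ihl ihr => exact isFitchOptimal_node ihl ihr

end BTree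

/-- For every node `v` of a rooted binary tree with Boolean leaf labels
(equivalently, for every such tree, since every node is the root of a subtree), the Fitch
set equals the set of values achieving the minimum Sankoff cost:
`B(v) = {b : s_b(v) = min(s₀(v), s₁(v))}`; in particular `B(v) = {0,1}` iff
`s₀(v) = s₁(v)`. -/
theorem fitchSet_eq_sankoff_argmin (T : BTree) :
    (∀ b : Bool, b ∈ fitchSet T ↔
      sankoff b T = min (sankoff false T) (sankoff true T)) ∧
    (fitchSet T = {false, true} ↔ sankoff false T = sankoff true T) := by
  have hargmin : ∀ b : Bool, b ∈ fitchSet T ↔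
      sankoff b T = min (sankoff false T) (sankoff true T) := fun b =>
    ((BTree.isFitchOptimal T).2 b).trans (eq_min_false_true_iff (sankoff · T) b).symm
  refine ⟨hargmin, ?_⟩
  have huniv : fitchSet T = {false, true} ↔ false ∈ fitchSet T ∧ true ∈ fitchSet T := by
    simp [Finset.ext_iff, Bool.forall_bool]
  rw [huniv, hargmin, hargmin, eq_comm, min_eq_left_iff, eq_comm, min_eq_right_iff,
    le_antisymm_iff]
end
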